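/- arXiv:0902.0556 — 9 statements merged into one kernel-verified Lean document; each statement's English description precedes it below -/
import Mathlib

section
/- The set L(n₁,...,n_k; n) of k-fold lattice paths is in bijection with the set of pairs ((x₁,...,x_k), ≤) where each xᵢ : [nᵢ] → [n] is a monotone map and ≤ is a linear order on the disjoint union [n₁] ⊔ ... ⊔ [n_k] restricting to the natural order on each [nᵢ] and compatible with the maps xᵢ (i.e. if a ≤ b in the linear order then the images under the corresponding xᵢ's satisfy x(a) ≤ x(b) in [n]). -/
/-!
A word `f : [N] → [k]` with `nᵢ + 1` occurrences of each letter `i` is the same thing as a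
shuffle: an enumeration `e : [N] ≃ Σ i, [nᵢ]` that is increasing on each summand. Indeed
`f = fst ∘ e`, and conversely `e` is recovered by listing each fibre of `f` in increasing order;
it is unique because a strictly monotone map out of a well-order is determined by its range.
Enumerations `[N] ≃ Σ i, [nᵢ]` are in turn the same as linear orders on `Σ i, [nᵢ]`, and the
shuffle condition says exactly that the order restricts to the natural one on each `[nᵢ]`.
Finally, along such an enumeration a monotone map `[N] → [n]` is the same as a family of maps
`xᵢ : [nᵢ] → [n]` that is monotone for the linear order; each `xᵢ` is then monotone since the
order restricts to the natural one on `[nᵢ]`.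
-/

open Finset

namespace LatticePath

section Shuffle

variable {γ ι : Type*} {β : ι → Type*}

def IsShuffle [Preorder γ] [∀ i, Preorder (β i)] (e : γ ≃ Σ i, β i) : Prop :=
  ∀ i, Monotone fun b : β i => e.symm ⟨i, b⟩

theorem range_symm_comp_sigmaMk (e : γ ≃ Σ i, β i) (i : ι) :
    Set.range (fun b : β i => e.symm ⟨i, b⟩) = {t | (e t).1 = i} := by
  ext t
  constructor
  · rintro ⟨b, rfl⟩
    simp
  · intro ht
    obtain ⟨⟨j, b⟩, hb⟩ : ∃ s, e t = s := ⟨_, rfl⟩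
    obtain rfl : j = i := by simpa [hb] using ht
    exact ⟨b, by simp [← hb]⟩

theorem card_filter_fst_apply_eq [Fintype γ] [DecidableEq ι] (e : γ ≃ Σ i, β i) (i : ι)
    [Fintype (β i)] : #{t | (e t).1 = i} = Fintype.card (β i) := by
  rw [← Fintype.card_subtype]
  exact Fintype.card_congr ((Equiv.ofInjective _ (e.symm.injective.comp sigma_mk_injective)).trans
    (Equiv.setCongr (range_symm_comp_sigmaMk e i))).symm

theorem IsShuffle.eq_of_fst_eq [PartialOrder γ] [∀ i, LinearOrder (β i)]
    [∀ i, WellFoundedLT (β i)] {e e' : γ ≃ Σ i, β i} (he : IsShuffle e) (he' : IsShuffle e')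
    (h : ∀ t, (e t).1 = (e' t).1) : e = e' := by
  refine Equiv.symm_bijective.injective (Equiv.ext fun ⟨i, b⟩ => ?_)
  have hrange : Set.range (fun b : β i => e.symm ⟨i, b⟩) = Set.range fun b => e'.symm ⟨i, b⟩ := by
    simp only [range_symm_comp_sigmaMk, h]
  have hmono := (he i).strictMono_of_injective (e.symm.injective.comp sigma_mk_injective)
  have hmono' := (he' i).strictMono_of_injective (e'.symm.injective.comp sigma_mk_injective)
  exact congrFun (hmono.range_inj hmono' |>.mp hrange) b

variable [LinearOrder γ] [Fintype γ] [DecidableEq ι] {m : ι → ℕ}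

def shuffleOfWord (f : γ → ι) (hf : ∀ i, #{t | f t = i} = m i) : γ ≃ Σ i, Fin (m i) :=
  (Equiv.sigmaFiberEquiv f).symm.trans <| Equiv.sigmaCongrRight fun i =>
    (Fintype.orderIsoFinOfCardEq _ ((Fintype.card_subtype _).trans (hf i))).symm.toEquiv

theorem isShuffle_shuffleOfWord (f : γ → ι) (hf : ∀ i, #{t | f t = i} = m i) :
    IsShuffle (shuffleOfWord f hf) :=
  fun i _ _ hab => (Fintype.orderIsoFinOfCardEq {t // f t = i} _).monotone hab

def wordEquivShuffle :
    {f : γ → ι // ∀ i, #{t | f t = i} = m i} ≃ {e : γ ≃ Σ i, Fin (m i) // IsShuffle e} where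
  toFun f := ⟨shuffleOfWord f.1 f.2, isShuffle_shuffleOfWord f.1 f.2⟩
  invFun e := ⟨fun t => (e.1 t).1,
    fun i => (card_filter_fst_apply_eq e.1 i).trans (Fintype.card_fin _)⟩
  left_inv _ := rfl
  right_inv e := Subtype.ext <| IsShuffle.eq_of_fst_eq (Subtype.property _) e.2 fun _ => rfl

end Shuffle

def equivFinEquivLinearOrder {α : Type*} [Fintype α] {N : ℕ} (h : Fintype.card α = N) :
    (Fin N ≃ α) ≃ LinearOrder α where
  toFun e := LinearOrder.lift' e.symm e.symm.injective
  invFun L := (@monoEquivOfFin α _ L _ h).toEquiv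
  left_inv e := by
    let _ := LinearOrder.lift' e.symm e.symm.injective
    let e' : Fin N ≃o α := ⟨e, fun {a b} => by change e.symm (e a) ≤ e.symm (e b) ↔ a ≤ b; simp⟩
    exact congrArg RelIso.toEquiv (Subsingleton.elim (monoEquivOfFin α h) e')
  right_inv L := by
    let _ := L
    exact LinearOrder.ext fun u v => (monoEquivOfFin α h).symm.le_iff_le

section Compatible

variable {γ δ ι : Type*} {β : ι → Type*} [Preorder γ] [Preorder δ] [∀ i, Preorder (β i)]

/-- The compatibility condition is phrased through `q.2.symm` so that it is literally the one for
the linear order `equivFinEquivLinearOrder h q.2` on `Σ i, β i`. -/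
def shuffleProdOrderHomEquiv :
    {e : γ ≃ Σ i, β i // IsShuffle e} × (γ →o δ) ≃
      {q : ((i : ι) → β i →o δ) × (γ ≃ Σ i, β i) //
        IsShuffle q.2 ∧ ∀ u v, q.2.symm u ≤ q.2.symm v → q.1 u.1 u.2 ≤ q.1 v.1 v.2} where
  toFun p := ⟨(fun i => p.2.comp ⟨fun b => p.1.1.symm ⟨i, b⟩, p.1.2 i⟩, p.1.1),
    p.1.2, fun _ _ h => p.2.monotone h⟩
  invFun q := (⟨q.1.2, q.2.1⟩, ⟨fun t => q.1.1 (q.1.2 t).1 (q.1.2 t).2,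
    fun a b hab => q.2.2 _ _ (by simpa using hab)⟩)
  left_inv p := by ext <;> simp
  right_inv q := Subtype.ext <| Prod.ext (funext fun i => OrderHom.ext _ _ <| funext fun b =>
    congrArg (fun s : Σ i, β i => q.1.1 s.1 s.2) (q.1.2.apply_symm_apply ⟨i, b⟩)) rfl

end Compatible

end LatticePath

/-- Dual description of the lattice path operad: the set `L(n₁,…,n_k;n)` of subdivided
integer-strings (words with `nᵢ+1` occurrences of each letter `i`, subdivided into `n+1`
consecutive blocks) is in bijection with the set of pairs `((x₁,…,x_k), ≤)` where each
`xᵢ : [nᵢ] → [n]` is monotone and `≤` is a linear order on `[n₁] ⊔ … ⊔ [n_k]` restricting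
to the natural order on each `[nᵢ]` and compatible with the maps `xᵢ`. -/
theorem lattice_paths_dual_description (k n : ℕ) (ns : Fin k → ℕ) :
    Nonempty (
      ({ f : Fin (∑ i, (ns i + 1)) → Fin k //
          ∀ i : Fin k, (Finset.univ.filter (fun t => f t = i)).card = ns i + 1 }
        × (Fin (∑ i, (ns i + 1)) →o Fin (n+1)))
      ≃
      { q : ((i : Fin k) → (Fin (ns i + 1) →o Fin (n+1)))
            × LinearOrder (Σ i : Fin k, Fin (ns i + 1)) //
          (∀ (i : Fin k) (a b : Fin (ns i + 1)), a ≤ b → q.2.le ⟨i, a⟩ ⟨i, b⟩) ∧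
          (∀ u v : Σ i : Fin k, Fin (ns i + 1),
            q.2.le u v → q.1 u.1 u.2 ≤ q.1 v.1 v.2) }) := by
  have hcard : Fintype.card (Σ i, Fin (ns i + 1)) = ∑ i, (ns i + 1) := by simp
  exact ⟨(LatticePath.wordEquivShuffle.prodCongr (Equiv.refl _)).trans <|
    LatticePath.shuffleProdOrderHomEquiv.trans <|
      (Equiv.refl _).prodCongr (LatticePath.equivFinEquivLinearOrder hcard) |>.subtypeEquiv
        fun _ => Iff.rfl⟩
end

section
/- For each m ≥ 0, the subcollection L_m of the lattice path operad L consisting of all lattice paths of complexity at most m is closed under the operadic substitution maps of L; that is, if x ∈ L_m(n₁,...,n_k;n) and y ∈ L_m(m₁,...,m_l;nᵢ) then x ∘ᵢ y ∈ L_m. -/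
/-- Number of alternations (changes of letter) along a word. -/
def altCount : List ℕ → ℕ
  | [] => 0
  | [_] => 0
  | a :: b :: rest => (if a = b then 0 else 1) + altCount (b :: rest)

/-- The individual complexity index `c_{ab}` of a word: the number of alternations between
`a` and `b` in the subword consisting of all occurrences of `a` and `b`. -/
def complexityIdx (w : List ℕ) (a b : ℕ) : ℕ :=
  altCount (w.filter (fun c => c = a ∨ c = b))

/-- Operadic substitution `x ∘ᵢ y` of subdivided integer-strings (a string is a list of
pairs (letter, block index)): the `t`-th occurrence of the letter `i` in `x` is replaced
by the `t`-th block of `y`, letters being renumbered so that the letters `a` of `y`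
become `a + i` and the letters `j > i` of `x` become `j + l - 1`, where `l` is the number
of colours of `y`; inserted letters inherit the block index of the replaced occurrence. -/
def substStr (i l : ℕ) : List (ℕ × ℕ) → List (ℕ × ℕ) → ℕ → List (ℕ × ℕ)
  | [], _, _ => []
  | (j, b) :: rest, y, t =>
    if j < i then (j, b) :: substStr i l rest y t
    else if j = i then
      ((y.filter (fun p => p.2 = t)).map (fun p => (p.1 + i, b))) ++ substStr i l rest y (t + 1)
    else (j + l - 1, b) :: substStr i l rest y t


/-! The letters of `x ∘ᵢ y` are the renumbered letters `j ≠ i` of `x` and the shifted letters of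
`y`, the latter filling the slots of the occurrences of `i` block by block. For two letters
of `y`, the `(a, b)`-subword of `x ∘ᵢ y` is the shifted `(a, b)`-subword of a sublist of `y`,
because the blocks of `y` are sorted and inserted in order. In all other cases it arises from
the corresponding subword of `x` (with `i` standing in for the letter of `y`) by replacing every
letter by a possibly empty run of copies of itself. Neither operation increases the number of
alternations. -/

theorem altCount_cons_cons (a b : ℕ) (w : List ℕ) :
    altCount (a :: b :: w) = (if a = b then 0 else 1) + altCount (b :: w) := rfl

theorem altCount_le_cons (a : ℕ) (w : List ℕ) : altCount w ≤ altCount (a :: w) := by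
  cases w with
  | nil => simp [altCount]
  | cons b w => rw [altCount_cons_cons]; omega

theorem altCount_cons_le_cons_cons (a b : ℕ) (w : List ℕ) :
    altCount (a :: w) ≤ altCount (a :: b :: w) := by
  cases w with
  | nil => exact Nat.zero_le _
  | cons c w =>
    simp only [altCount_cons_cons]
    split_ifs <;> omega

theorem altCount_cons_replicate_append (c n : ℕ) (w : List ℕ) :
    altCount (c :: (List.replicate n c ++ w)) = altCount (c :: w) := by
  induction n with
  | zero => rfl
  | succ n ih => rw [List.replicate_succ, List.cons_append, altCount_cons_cons, if_pos rfl, ih,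
      Nat.zero_add]

theorem altCount_map_le (f : ℕ → ℕ) (w : List ℕ) : altCount (w.map f) ≤ altCount w := by
  induction w with
  | nil => exact le_rfl
  | cons a w ih =>
    cases w with
    | nil => exact le_rfl
    | cons b w =>
      simp only [List.map_cons, altCount_cons_cons] at ih ⊢
      have : (if f a = f b then 0 else 1) ≤ if a = b then 0 else 1 := by
        split_ifs <;> simp_all
      omega

inductive Stutter : List ℕ → List ℕ → Prop
  | nil : Stutter [] []
  | cons {w u : List ℕ} (n d : ℕ) : Stutter w u → Stutter (List.replicate n d ++ w) (d :: u)

theorem List.Sublist.stutter {w u : List ℕ} (h : w.Sublist u) : Stutter w u := by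
  induction h with
  | slnil => exact .nil
  | cons d _ ih => exact .cons 0 d ih
  | cons_cons d _ ih => exact .cons 1 d ih

namespace Stutter

theorem altCount_cons_le {w u : List ℕ} (h : Stutter w u) (c : ℕ) :
    altCount (c :: w) ≤ altCount (c :: u) := by
  induction h generalizing c with
  | nil => exact le_rfl
  | @cons w u n d _ ih =>
    calc altCount (c :: (List.replicate n d ++ w))
        ≤ altCount (c :: d :: w) := by
          cases n with
          | zero => exact altCount_cons_le_cons_cons c d _
          | succ n =>
            rw [List.replicate_succ, List.cons_append, altCount_cons_cons, altCount_cons_cons,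
              altCount_cons_replicate_append]
      _ ≤ altCount (c :: d :: u) := by
          rw [altCount_cons_cons, altCount_cons_cons]
          exact Nat.add_le_add_left (ih d) _

theorem altCount_le {w u : List ℕ} (h : Stutter w u) : altCount w ≤ altCount u := by
  cases h with
  | nil => exact le_rfl
  | @cons w u n d h =>
    calc altCount (List.replicate n d ++ w)
        ≤ altCount (d :: (List.replicate n d ++ w)) := altCount_le_cons d _
      _ = altCount (d :: w) := altCount_cons_replicate_append d n w
      _ ≤ altCount (d :: u) := h.altCount_cons_le d

end Stutter

theorem List.Sublist.altCount_le {w u : List ℕ} (h : w.Sublist u) : altCount w ≤ altCount u :=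
  h.stutter.altCount_le

theorem complexityIdx_comm (w : List ℕ) (a b : ℕ) :
    complexityIdx w a b = complexityIdx w b a := by
  unfold complexityIdx
  congr 1
  exact List.filter_congr fun c _ => decide_eq_decide.mpr or_comm

theorem filter_le_eq_filter_eq_append {α : Type*} {f : α → ℕ} {y : List α}
    (hsorted : (y.map f).Pairwise (· ≤ ·)) (t : ℕ) :
    y.filter (fun p => t ≤ f p) =
      y.filter (fun p => f p = t) ++ y.filter (fun p => t + 1 ≤ f p) := by
  induction y with
  | nil => rfl
  | cons p y ih =>
    rw [List.map_cons, List.pairwise_cons, List.forall_mem_map] at hsorted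
    rcases lt_trichotomy (f p) t with hlt | heq | hgt
    · have : ¬ t ≤ f p := by omega
      simp [hlt.ne, this, hlt.le, ih hsorted.2]
    · simp [heq, ih hsorted.2]
    · have hall : ∀ q ∈ p :: y, t < f q := by
        simp only [List.mem_cons, forall_eq_or_imp]
        exact ⟨hgt, fun q hq => hgt.trans_le (hsorted.1 q hq)⟩
      have hnil : (p :: y).filter (fun q => f q = t) = [] :=
        List.filter_eq_nil_iff.mpr fun q hq => by simpa using (hall q hq).ne'
      rw [hnil, List.nil_append]
      exact List.filter_congr fun q hq => by have := hall q hq; simp; omega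

def renumber (i l j : ℕ) : ℕ := if j < i then j else j + l - 1

theorem renumber_inj {i l j j' : ℕ} (hj : j ≠ i) (hj' : j' ≠ i) :
    renumber i l j = renumber i l j' ↔ j = j' := by
  unfold renumber; split_ifs <;> omega

theorem renumber_ne_add {i l j c : ℕ} (hj : j ≠ i) (hc : c < l) : renumber i l j ≠ c + i := by
  unfold renumber; split_ifs <;> omega

theorem exists_renumber_eq {i l c : ℕ} (h : c < i ∨ i + l ≤ c) :
    ∃ j, j ≠ i ∧ renumber i l j = c := by
  rcases h with h | h
  · exact ⟨c, h.ne, if_pos h⟩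
  · exact ⟨c + 1 - l, by omega, by unfold renumber; split_ifs <;> omega⟩

section substStr

variable {i l : ℕ} {y : List (ℕ × ℕ)}

theorem substStr_cons_of_ne {j : ℕ} (hj : j ≠ i) (b t : ℕ) (x : List (ℕ × ℕ)) :
    substStr i l ((j, b) :: x) y t = (renumber i l j, b) :: substStr i l x y t := by
  rcases Nat.lt_or_gt_of_ne hj with h | h
  · simp [substStr, renumber, h]
  · simp [substStr, renumber, hj, Nat.not_lt.mpr h.le]

theorem substStr_cons_self (b t : ℕ) (x : List (ℕ × ℕ)) :
    substStr i l ((i, b) :: x) y t =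
      (y.filter (fun p => p.2 = t)).map (fun p => (p.1 + i, b)) ++ substStr i l x y (t + 1) := by
  simp [substStr]

/-- `P` selects letters of `x ∘ᵢ y` and `Q` letters of `x`; `g` sends a selected letter of `x`
to the letter it becomes, and `i` to the only letter of `y` that `P` can select. -/
theorem stutter_filter_substStr {P Q : ℕ → Bool} {g : ℕ → ℕ}
    (hout : ∀ j, j ≠ i → P (renumber i l j) = Q j)
    (hg : ∀ j, j ≠ i → Q j → g j = renumber i l j)
    (hin : ∀ p ∈ y, P (p.1 + i) → Q i ∧ p.1 + i = g i) :
    ∀ (x : List (ℕ × ℕ)) (t : ℕ),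
      Stutter (((substStr i l x y t).map Prod.fst).filter P) (((x.map Prod.fst).filter Q).map g)
  | [], _ => .nil
  | (j, b) :: x, t => by
    have ih := stutter_filter_substStr hout hg hin x
    by_cases hj : j = i
    · subst hj
      rw [substStr_cons_self, List.map_append, List.filter_append, List.map_cons, List.filter_cons]
      set block := (((y.filter (fun p => p.2 = t)).map fun p => (p.1 + j, b)).map Prod.fst).filter P
      have hblock : ∀ e ∈ block, Q j ∧ e = g j := by
        simp only [block, List.mem_filter, List.map_map, List.mem_map]
        rintro _ ⟨⟨p, hp, rfl⟩, hP⟩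
        exact hin p hp.1 hP
      by_cases hQ : Q j
      · rw [if_pos hQ, List.map_cons,
          List.eq_replicate_iff.mpr ⟨rfl, fun e he => (hblock e he).2⟩]
        exact .cons _ _ (ih (t + 1))
      · rw [if_neg hQ, List.eq_nil_iff_forall_not_mem.mpr fun e he => hQ (hblock e he).1]
        exact ih (t + 1)
    · rw [substStr_cons_of_ne hj, List.map_cons, List.filter_cons, List.map_cons,
        List.filter_cons, hout j hj]
      split
      next hQ =>
        rw [List.map_cons, hg j hj hQ]
        exact .cons 1 _ (ih t)
      next => exact ih t

theorem filter_substStr_sublist {P : ℕ → Bool}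
    (hP : ∀ j, j ≠ i → P (renumber i l j) = false)
    (hsorted : (y.map Prod.snd).Pairwise (· ≤ ·)) :
    ∀ (x : List (ℕ × ℕ)) (t : ℕ),
      (((substStr i l x y t).map Prod.fst).filter P).Sublist
        (((y.filter (fun p => t ≤ p.2)).map fun p => p.1 + i).filter P)
  | [], _ => List.nil_sublist _
  | (j, b) :: x, t => by
    have ih := filter_substStr_sublist hP hsorted x
    by_cases hj : j = i
    · subst hj
      rw [substStr_cons_self, filter_le_eq_filter_eq_append hsorted, List.map_append,
        List.map_append, List.filter_append, List.filter_append, List.map_map]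
      exact (ih (t + 1)).append_left _
    · rw [substStr_cons_of_ne hj, List.map_cons, List.filter_cons, hP j hj]
      exact ih t

theorem complexityIdx_substStr_renumber_le (hletters : ∀ p ∈ y, p.1 < l) {a b : ℕ}
    (ha : a ≠ i) (hb : b ≠ i) (x : List (ℕ × ℕ)) (t : ℕ) :
    complexityIdx ((substStr i l x y t).map Prod.fst) (renumber i l a) (renumber i l b) ≤
      complexityIdx (x.map Prod.fst) a b := by
  have hstutter := stutter_filter_substStr (i := i) (l := l)
    (P := fun c => decide (c = renumber i l a ∨ c = renumber i l b))
    (Q := fun c => decide (c = a ∨ c = b)) (g := renumber i l)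
    (fun j hj => by simp [renumber_inj hj ha, renumber_inj hj hb]) (fun _ _ _ => rfl)
    (fun p hp hP => by
      have := renumber_ne_add ha (hletters p hp)
      have := renumber_ne_add hb (hletters p hp)
      simp only [decide_eq_true_eq] at hP
      omega) x t
  exact hstutter.altCount_le.trans (altCount_map_le _ _)

theorem complexityIdx_substStr_renumber_add_le (hletters : ∀ p ∈ y, p.1 < l) {a β : ℕ}
    (ha : a ≠ i) (hβ : β < l) (x : List (ℕ × ℕ)) (t : ℕ) :
    complexityIdx ((substStr i l x y t).map Prod.fst) (renumber i l a) (β + i) ≤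
      complexityIdx (x.map Prod.fst) a i := by
  have hstutter := stutter_filter_substStr (i := i) (l := l)
    (P := fun c => decide (c = renumber i l a ∨ c = β + i))
    (Q := fun c => decide (c = a ∨ c = i))
    (g := fun c => if c = i then β + i else renumber i l a)
    (fun j hj => by simp [renumber_inj hj ha, renumber_ne_add hj hβ, hj])
    (fun j hj hQ => by simp_all)
    (fun p hp hP => by
      have := renumber_ne_add ha (hletters p hp)
      simp only [decide_eq_true_eq] at hP
      refine ⟨by simp, ?_⟩
      rw [if_pos rfl]
      omega) x t
  exact hstutter.altCount_le.trans (altCount_map_le _ _)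

theorem complexityIdx_substStr_add_add_le (hsorted : (y.map Prod.snd).Pairwise (· ≤ ·))
    {α β : ℕ} (hα : α < l) (hβ : β < l) (x : List (ℕ × ℕ)) (t : ℕ) :
    complexityIdx ((substStr i l x y t).map Prod.fst) (α + i) (β + i) ≤
      complexityIdx (y.map Prod.fst) α β := by
  set y' := y.filter (fun p => t ≤ p.2)
  have hsub := filter_substStr_sublist (i := i) (l := l)
    (P := fun c => decide (c = α + i ∨ c = β + i))
    (fun j hj => by simp [renumber_ne_add hj hα, renumber_ne_add hj hβ]) hsorted x t
  have hshift : (y'.map fun p => p.1 + i).filter (fun c => decide (c = α + i ∨ c = β + i)) =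
      ((y'.map Prod.fst).filter fun c => decide (c = α ∨ c = β)).map (· + i) := by
    rw [show (fun p : ℕ × ℕ => p.1 + i) = (· + i) ∘ Prod.fst from rfl, ← List.map_map,
      List.filter_map]
    congr 2
    funext c
    simp
  unfold complexityIdx
  calc altCount (((substStr i l x y t).map Prod.fst).filter _)
      ≤ altCount ((y'.map fun p => p.1 + i).filter _) := hsub.altCount_le
    _ ≤ altCount ((y'.map Prod.fst).filter _) := hshift ▸ altCount_map_le _ _
    _ ≤ altCount ((y.map Prod.fst).filter _) :=
        ((List.filter_sublist.map _).filter _).altCount_le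

end substStr

theorem complexity_filtration_closed_under_substitution_general
    (m i l : ℕ) (x y : List (ℕ × ℕ))
    (hblocks : (y.map Prod.snd).Pairwise (· ≤ ·))
    (hletters : ∀ p ∈ y, p.1 < l)
    (hx : ∀ a b : ℕ, a ≠ b → complexityIdx (x.map Prod.fst) a b ≤ m)
    (hy : ∀ a b : ℕ, a ≠ b → complexityIdx (y.map Prod.fst) a b ≤ m) :
    ∀ a b : ℕ, a ≠ b → complexityIdx ((substStr i l x y 0).map Prod.fst) a b ≤ m := by
  have of_outer : ∀ a b, a ≠ b → a < i ∨ i + l ≤ a →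
      complexityIdx ((substStr i l x y 0).map Prod.fst) a b ≤ m := by
    intro a b hab ha
    obtain ⟨a, ha', rfl⟩ := exists_renumber_eq ha
    by_cases hb : b < i ∨ i + l ≤ b
    · obtain ⟨b, hb', rfl⟩ := exists_renumber_eq hb
      exact (complexityIdx_substStr_renumber_le hletters ha' hb' x 0).trans
        (hx a b fun h => hab (h ▸ rfl))
    · obtain ⟨β, rfl⟩ : ∃ β, b = β + i := ⟨b - i, by omega⟩
      exact (complexityIdx_substStr_renumber_add_le hletters ha' (by omega) x 0).trans
        (hx a i ha')
  intro a b hab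
  by_cases ha : a < i ∨ i + l ≤ a
  · exact of_outer a b hab ha
  by_cases hb : b < i ∨ i + l ≤ b
  · exact complexityIdx_comm _ a b ▸ of_outer b a hab.symm hb
  obtain ⟨α, rfl⟩ : ∃ α, a = α + i := ⟨a - i, by omega⟩
  obtain ⟨β, rfl⟩ : ∃ β, b = β + i := ⟨b - i, by omega⟩
  exact (complexityIdx_substStr_add_add_le hblocks (by omega) (by omega) x 0).trans
    (hy α β (by omega))

/-- The `m`-th filtration stage `L_m` of the lattice path operad (lattice paths of
complexity at most `m`) is closed under the operadic substitution maps. -/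
theorem complexity_filtration_closed_under_substitution
    (m i l : ℕ) (x y : List (ℕ × ℕ))
    (hblocks : (y.map Prod.snd).Pairwise (· ≤ ·))
    (hblock_lt : ∀ p ∈ y, p.2 < (x.map Prod.fst).count i)
    (hletters : ∀ p ∈ y, p.1 < l)
    (hx : ∀ a b : ℕ, a ≠ b → complexityIdx (x.map Prod.fst) a b ≤ m)
    (hy : ∀ a b : ℕ, a ≠ b → complexityIdx (y.map Prod.fst) a b ≤ m) :
    ∀ a b : ℕ, a ≠ b → complexityIdx ((substStr i l x y 0).map Prod.fst) a b ≤ m :=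
  complexity_filtration_closed_under_substitution_general m i l x y hblocks hletters hx hy
end

section
/- A lattice path x ∈ L(n₁,...,n_k;n) has complexity index at most 2 if and only if for each i the minimal substring γᵢ(x) of its integer-string containing all occurrences of i, the family (γ₁(x),...,γ_k(x)) is nested: any two such substrings either have empty intersection or one contains the other. -/
/-- The set of positions at which the letter `a` occurs in `w`. -/
def occPositions (w : List ℕ) (a : ℕ) : Set ℕ :=
  {p | ∃ h : p < w.length, w.get ⟨p, h⟩ = a}

/-- Position of the first occurrence of `a` (start of the minimal substring `γ_a`). -/
noncomputable def firstOcc (w : List ℕ) (a : ℕ) : ℕ := sInf (occPositions w a)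

/-- Position of the last occurrence of `a` (end of the minimal substring `γ_a`). -/
noncomputable def lastOcc (w : List ℕ) (a : ℕ) : ℕ := sSup (occPositions w a)

/-!
An alternation count is one less than the length of the longest subsequence without two equal
adjacent letters (the `destutter` of the word), so `c_{ij} ≥ 3` exactly when `i j i j` or
`j i j i` is a subsequence of the word. Such a subsequence is in turn exactly what prevents the
intervals `γ_i` and `γ_j` from being disjoint or nested with no occurrence of the outer letter
inside the inner interval: order the two letters by first occurrence and compare the last ones.
-/

open scoped List

lemma altCount_cons_add_one (a : ℕ) (l : List ℕ) :
    altCount (a :: l) + 1 = (l.destutter' (· ≠ ·) a).length := by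
  induction l generalizing a with
  | nil => rfl
  | cons b l ih =>
    by_cases hab : a = b
    · subst hab
      rw [altCount, List.destutter'_cons_neg _ (not_not.2 rfl), ← ih, if_pos rfl, zero_add]
    · rw [altCount, List.destutter'_cons_pos _ hab, List.length_cons, ← ih, if_neg hab]
      omega

lemma altCount_eq_length_destutter_sub_one (l : List ℕ) :
    altCount l = (l.destutter (· ≠ ·)).length - 1 := by
  cases l with
  | nil => rfl
  | cons a l => rw [List.destutter_cons', ← altCount_cons_add_one]; rfl

lemma two_lt_altCount_iff {l : List ℕ} :
    2 < altCount l ↔ ∃ a b c d, [a, b, c, d] <+ l ∧ [a, b, c, d].IsChain (· ≠ ·) := by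
  rw [altCount_eq_length_destutter_sub_one]
  constructor
  · intro h
    obtain ⟨a, b, c, d, r, hr⟩ : ∃ a b c d r, l.destutter (· ≠ ·) = a :: b :: c :: d :: r := by
      match hd : l.destutter (· ≠ ·) with
      | a :: b :: c :: d :: r => exact ⟨a, b, c, d, r, rfl⟩
      | [] | [_] | [_, _] | [_, _, _] => simp [hd] at h
    have hsub := List.destutter_sublist (· ≠ ·) l
    have hchain := List.isChain_destutter (· ≠ ·) l
    rw [hr] at hsub hchain
    refine ⟨a, b, c, d, (List.prefix_append [a, b, c, d] r).sublist.trans hsub, ?_⟩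
    simp only [List.isChain_cons_cons] at hchain ⊢
    exact ⟨hchain.1, hchain.2.1, hchain.2.2.1, List.isChain_singleton d⟩
  · rintro ⟨a, b, c, d, hs, hc⟩
    have := hc.length_le_length_destutter_ne hs
    simp only [List.length_cons, List.length_nil] at this
    omega

lemma two_lt_complexityIdx_iff {w : List ℕ} {i j : ℕ} (hij : i ≠ j) :
    2 < complexityIdx w i j ↔ [i, j, i, j] <+ w ∨ [j, i, j, i] <+ w := by
  rw [complexityIdx, two_lt_altCount_iff]
  constructor
  · rintro ⟨a, b, c, d, hs, hc⟩
    have hmem : ∀ x ∈ [a, b, c, d], x = i ∨ x = j := fun x hx => by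
      simpa using (List.mem_filter.1 (hs.subset hx)).2
    simp only [List.mem_cons, List.not_mem_nil, or_false, forall_eq_or_imp, forall_eq] at hmem
    simp only [List.isChain_cons_cons, List.isChain_singleton, and_true] at hc
    have hw := hs.trans List.filter_sublist
    rcases hmem with ⟨rfl | rfl, rfl | rfl, rfl | rfl, rfl | rfl⟩ <;> simp_all
  · have key : ∀ l : List ℕ, (∀ x ∈ l, x = i ∨ x = j) → l <+ w →
        l <+ w.filter (fun c => c = i ∨ c = j) := fun l hl hs => by
      have := hs.filter (fun c => c = i ∨ c = j)
      rwa [List.filter_eq_self.2 fun x hx => decide_eq_true (hl x hx)] at this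
    rintro (hs | hs)
    · exact ⟨i, j, i, j, key _ (by simp) hs, by simp [hij, hij.symm]⟩
    · exact ⟨j, i, j, i, key _ (by simp) hs, by simp [hij, hij.symm]⟩

section Occurrences

variable {w : List ℕ} {a b : ℕ}

lemma occPositions_nonempty (h : a ∈ w) : (occPositions w a).Nonempty := by
  obtain ⟨n, hn⟩ := List.mem_iff_get.mp h
  exact ⟨n, n.isLt, hn⟩

lemma occPositions_bddAbove (w : List ℕ) (a : ℕ) : BddAbove (occPositions w a) :=
  ⟨w.length, fun _ hp => hp.1.le⟩

lemma firstOcc_le {p : ℕ} (h : p ∈ occPositions w a) : firstOcc w a ≤ p :=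
  Nat.sInf_le h

lemma le_lastOcc {p : ℕ} (h : p ∈ occPositions w a) : p ≤ lastOcc w a :=
  le_csSup (occPositions_bddAbove w a) h

lemma firstOcc_mem (h : a ∈ w) : firstOcc w a ∈ occPositions w a :=
  Nat.sInf_mem (occPositions_nonempty h)

lemma lastOcc_mem (h : a ∈ w) : lastOcc w a ∈ occPositions w a :=
  Nat.sSup_mem (occPositions_nonempty h) (occPositions_bddAbove w a)

lemma ne_of_mem_occPositions {p q : ℕ} (hab : a ≠ b) (hp : p ∈ occPositions w a)
    (hq : q ∈ occPositions w b) : p ≠ q := by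
  rintro rfl
  obtain ⟨_, rfl⟩ := hp
  exact hab hq.2

end Occurrences

lemma sublist_iff_exists_strictMono {l w : List ℕ} :
    l <+ w ↔ ∃ f : Fin l.length → ℕ, StrictMono f ∧ ∀ k, f k ∈ occPositions w l[k] := by
  rw [List.sublist_iff_exists_fin_orderEmbedding_get_eq]
  constructor
  · rintro ⟨f, hf⟩
    exact ⟨fun k => f k, fun _ _ h => f.strictMono h, fun k => ⟨(f k).isLt, (hf k).symm⟩⟩
  · rintro ⟨f, hmono, hf⟩
    exact ⟨OrderEmbedding.ofStrictMono (fun k => ⟨f k, (hf k).1⟩) fun _ _ h => hmono h,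
      fun k => (hf k).2.symm⟩

lemma four_sublist_iff {w : List ℕ} {a b c d : ℕ} :
    [a, b, c, d] <+ w ↔ ∃ p₁ p₂ p₃ p₄, p₁ < p₂ ∧ p₂ < p₃ ∧ p₃ < p₄ ∧
      p₁ ∈ occPositions w a ∧ p₂ ∈ occPositions w b ∧
      p₃ ∈ occPositions w c ∧ p₄ ∈ occPositions w d := by
  rw [sublist_iff_exists_strictMono]
  constructor
  · rintro ⟨f, hmono, hf⟩
    exact ⟨f 0, f 1, f 2, f 3, hmono (Fin.lt_def.2 (by simp)),
      hmono (Fin.lt_def.2 (by simp)), hmono (Fin.lt_def.2 (by simp)),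
      hf 0, hf 1, hf 2, hf 3⟩
  · rintro ⟨p₁, p₂, p₃, p₄, h₁₂, h₂₃, h₃₄, m₁, m₂, m₃, m₄⟩
    refine ⟨![p₁, p₂, p₃, p₄], Fin.strictMono_iff_lt_succ.2 ?_, ?_⟩
    · intro k
      fin_cases k <;> assumption
    · intro k
      fin_cases k <;> assumption

def OccNested (w : List ℕ) (i j : ℕ) : Prop :=
  lastOcc w i < firstOcc w j ∨ lastOcc w j < firstOcc w i ∨
    (firstOcc w i ≤ firstOcc w j ∧ lastOcc w j ≤ lastOcc w i ∧
      ∀ p ∈ occPositions w i, p < firstOcc w j ∨ lastOcc w j < p) ∨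
    (firstOcc w j ≤ firstOcc w i ∧ lastOcc w i ≤ lastOcc w j ∧
      ∀ p ∈ occPositions w j, p < firstOcc w i ∨ lastOcc w i < p)

section Nested

variable {w : List ℕ} {i j : ℕ}

lemma OccNested.symm (h : OccNested w i j) : OccNested w j i := by
  unfold OccNested at h ⊢
  tauto

lemma OccNested.not_sublist (h : OccNested w i j) : ¬[i, j, i, j] <+ w := by
  rw [four_sublist_iff]
  rintro ⟨p₁, p₂, p₃, p₄, h₁₂, h₂₃, h₃₄, m₁, m₂, m₃, m₄⟩
  rcases h with h | h | ⟨-, -, h⟩ | ⟨-, -, h⟩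
  · have := le_lastOcc m₃; have := firstOcc_le m₂; omega
  · have := le_lastOcc m₂; have := firstOcc_le m₁; omega
  · have := firstOcc_le m₂; have := le_lastOcc m₄; have := h p₃ m₃; omega
  · have := firstOcc_le m₁; have := le_lastOcc m₃; have := h p₂ m₂; omega

lemma occNested_of_firstOcc_lt (hij : i ≠ j) (hi : i ∈ w) (hj : j ∈ w)
    (hlt : firstOcc w i < firstOcc w j) (h : ¬[i, j, i, j] <+ w) : OccNested w i j := by
  -- an `i` after `firstOcc w j` followed by any `j` completes `i j i j`
  have no_alt : ∀ {p q}, firstOcc w j < p → p < q →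
      p ∈ occPositions w i → q ∈ occPositions w j → False := fun hp hpq mp mq =>
    h (four_sublist_iff.2 ⟨_, _, _, _, hlt, hp, hpq, firstOcc_mem hi, firstOcc_mem hj, mp, mq⟩)
  rcases lt_or_ge (lastOcc w i) (firstOcc w j) with hdisj | hge
  · exact Or.inl hdisj
  have hfl : firstOcc w j < lastOcc w i :=
    hge.lt_of_ne (ne_of_mem_occPositions hij.symm (firstOcc_mem hj) (lastOcc_mem hi))
  have hll : lastOcc w j < lastOcc w i :=
    (not_lt.1 fun h' => no_alt hfl h' (lastOcc_mem hi) (lastOcc_mem hj)).lt_of_ne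
      (ne_of_mem_occPositions hij.symm (lastOcc_mem hj) (lastOcc_mem hi))
  refine Or.inr (Or.inr (Or.inl ⟨hlt.le, hll.le, fun p hp => ?_⟩))
  by_contra! hmid
  exact no_alt (hmid.1.lt_of_ne' (ne_of_mem_occPositions hij hp (firstOcc_mem hj)))
    (hmid.2.lt_of_ne (ne_of_mem_occPositions hij hp (lastOcc_mem hj))) hp (lastOcc_mem hj)

lemma occNested_of_not_sublist (hij : i ≠ j) (hi : i ∈ w) (hj : j ∈ w)
    (hij₁ : ¬[i, j, i, j] <+ w) (hij₂ : ¬[j, i, j, i] <+ w) : OccNested w i j := by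
  rcases (ne_of_mem_occPositions hij (firstOcc_mem hi) (firstOcc_mem hj)).lt_or_gt with h | h
  · exact occNested_of_firstOcc_lt hij hi hj h hij₁
  · exact (occNested_of_firstOcc_lt hij.symm hj hi h hij₂).symm

end Nested

/-- An integer-string has complexity index at most `2` if and only if the family of
minimal substrings `γ_i` (the interval from the first to the last occurrence of `i`)
is nested: for any two letters `i ≠ j`, the substrings `γ_i` and `γ_j` either have
empty intersection, or one of them contains the other (the inner one then containing
no occurrence of the outer letter, i.e. the occurrences are nested as substrings). -/
theorem complexity_le_two_iff_nested (w : List ℕ) :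
    (∀ i j : ℕ, i ≠ j → complexityIdx w i j ≤ 2) ↔
    (∀ i j : ℕ, i ≠ j → i ∈ w → j ∈ w →
      (lastOcc w i < firstOcc w j ∨ lastOcc w j < firstOcc w i ∨
       (firstOcc w i ≤ firstOcc w j ∧ lastOcc w j ≤ lastOcc w i ∧
         ∀ p ∈ occPositions w i, p < firstOcc w j ∨ lastOcc w j < p) ∨
       (firstOcc w j ≤ firstOcc w i ∧ lastOcc w i ≤ lastOcc w j ∧
         ∀ p ∈ occPositions w j, p < firstOcc w i ∨ lastOcc w i < p))) := by
  refine forall₂_congr fun i j => forall_congr' fun hij => ?_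
  show complexityIdx w i j ≤ 2 ↔ i ∈ w → j ∈ w → OccNested w i j
  rw [← not_lt, two_lt_complexityIdx_iff hij, not_or]
  constructor
  · exact fun ⟨h₁, h₂⟩ hi hj => occNested_of_not_sublist hij hi hj h₁ h₂
  · intro h
    have mem : ∀ {a b}, [a, b, a, b] <+ w → a ∈ w ∧ b ∈ w := fun hs =>
      ⟨hs.subset (by simp), hs.subset (by simp)⟩
    exact ⟨fun hs => (h (mem hs).1 (mem hs).2).not_sublist hs,
      fun hs => (h (mem hs).2 (mem hs).1).symm.not_sublist hs⟩
end

section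
/- For every permutation pair and label data (μ,σ) and (μ₁,σ₁),...,(μ_k,σ_k) in the complete graph operad K, the substitution ((μ,σ);(μ₁,σ₁),...,(μ_k,σ_k)) ↦ (μ(μ₁,...,μ_k), σ(σ₁,...,σ_k)) is monotone in each variable with respect to the partial order on K(k), where (m,ρ) ≤ (n,τ) on an edge iff m < n or (m,ρ)=(n,τ), and the order on K(k) is edgewise. -/
/-- The global rank of the vertex `v = ⟨j, a⟩` (element `a` of the `j`-th block) after
block substitution: the blocks are moved as intervals according to `σ` and permuted
internally by the `σ_j`. -/
def blockRank {k : ℕ} (m : Fin k → ℕ) (σ : Equiv.Perm (Fin k))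
    (σs : ∀ j : Fin k, Equiv.Perm (Fin (m j))) (v : Σ j : Fin k, Fin (m j)) : ℕ :=
  (∑ j' ∈ Finset.univ.filter (fun j' => σ j' < σ v.1), m j') + (σs v.1 v.2 : ℕ)

lemma blockRank_lt_of_lt {k : ℕ} (m : Fin k → ℕ) (σ : Equiv.Perm (Fin k))
    (σs : ∀ j : Fin k, Equiv.Perm (Fin (m j))) (v w : Σ j : Fin k, Fin (m j))
    (h : σ v.1 < σ w.1) : blockRank m σ σs v < blockRank m σ σs w := by
  unfold blockRank
  have hnot : v.1 ∉ Finset.univ.filter (fun j' => σ j' < σ v.1) := by simp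
  have hle : (∑ j' ∈ insert v.1 (Finset.univ.filter fun j' => σ j' < σ v.1), m j') ≤
      ∑ j' ∈ Finset.univ.filter (fun j' => σ j' < σ w.1), m j' := by
    apply Finset.sum_le_sum_of_subset
    intro x hx
    simp only [Finset.mem_insert, Finset.mem_filter, Finset.mem_univ, true_and] at hx ⊢
    rcases hx with rfl | hx
    · exact h
    · exact hx.trans h
  rw [Finset.sum_insert hnot] at hle
  have h2 : (σs v.1 v.2 : ℕ) < m v.1 := (σs v.1 v.2).isLt
  have h3 : 0 ≤ (σs w.1 w.2 : ℕ) := Nat.zero_le _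
  omega

lemma blockRank_lt_iff {k : ℕ} (m : Fin k → ℕ) (σ : Equiv.Perm (Fin k))
    (σs : ∀ j : Fin k, Equiv.Perm (Fin (m j))) (v w : Σ j : Fin k, Fin (m j))
    (h : v.1 ≠ w.1) : blockRank m σ σs v < blockRank m σ σs w ↔ σ v.1 < σ w.1 := by
  constructor
  · intro hr
    rcases lt_trichotomy (σ v.1) (σ w.1) with h1 | h1 | h1
    · exact h1
    · exact absurd (σ.injective h1) h
    · exact absurd hr (not_lt.2 (blockRank_lt_of_lt m σ σs w v h1).le)
  · exact blockRank_lt_of_lt m σ σs v w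

/-- Substitution in the complete graph operad `K` is monotone in each variable for the
edgewise partial order (on an edge, `(m,ρ) ≤ (n,τ)` iff `m < n` or `(m,ρ) = (n,τ)`;
an orientation is recorded by the comparison of the values of the permutation).
The composite graph has vertex set `Σ j, Fin (m j)`; an edge between vertices in
different blocks inherits the outer label and orientation, an edge inside the `j`-th
block inherits the label and orientation of the `j`-th inner graph, orientations of the
composite being computed via the block ranks. -/
theorem complete_graph_operad_substitution_monotone
    (k : ℕ) (m : Fin k → ℕ)
    (μ ν : Fin k → Fin k → ℕ) (σ τ : Equiv.Perm (Fin k))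
    (μs νs : ∀ j : Fin k, Fin (m j) → Fin (m j) → ℕ)
    (σs τs : ∀ j : Fin k, Equiv.Perm (Fin (m j)))
    (houter : ∀ p q : Fin k, p < q →
      μ p q < ν p q ∨ (μ p q = ν p q ∧ ((σ p : ℕ) < (σ q : ℕ) ↔ (τ p : ℕ) < (τ q : ℕ))))
    (hinner : ∀ (j : Fin k) (a b : Fin (m j)), a < b →
      μs j a b < νs j a b ∨ (μs j a b = νs j a b ∧
        ((σs j a : ℕ) < (σs j b : ℕ) ↔ (τs j a : ℕ) < (τs j b : ℕ)))) :
    -- edges between different blocks of the composite graph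
    (∀ v w : Σ j : Fin k, Fin (m j), v.1 < w.1 →
      μ v.1 w.1 < ν v.1 w.1 ∨ (μ v.1 w.1 = ν v.1 w.1 ∧
        (blockRank m σ σs v < blockRank m σ σs w ↔ blockRank m τ τs v < blockRank m τ τs w))) ∧
    -- edges inside a block of the composite graph
    (∀ (j : Fin k) (a b : Fin (m j)), a < b →
      μs j a b < νs j a b ∨ (μs j a b = νs j a b ∧
        (blockRank m σ σs ⟨j, a⟩ < blockRank m σ σs ⟨j, b⟩ ↔
          blockRank m τ τs ⟨j, a⟩ < blockRank m τ τs ⟨j, b⟩))) := by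
  constructor
  · intro v w hvw
    rcases houter v.1 w.1 hvw with h | ⟨heq, hiff⟩
    · exact Or.inl h
    · refine Or.inr ⟨heq, ?_⟩
      rw [blockRank_lt_iff m σ σs v w hvw.ne, blockRank_lt_iff m τ τs v w hvw.ne]
      exact_mod_cast hiff
  · intro j a b hab
    rcases hinner j a b hab with h | ⟨heq, hiff⟩
    · exact Or.inl h
    · refine Or.inr ⟨heq, ?_⟩
      unfold blockRank
      dsimp only
      omega
end

section
/- The simplicial m-sphere S^m = Δ[m]/∂Δ[m] is a coalgebra over the m-th filtration stage L_m of the lattice path operad in the category of finite pointed sets with wedge product: for every x ∈ L(n₁,...,n_k;n) with complexity c(x) ≤ m and every y ∈ (S^m)_n, the tuple (x₁*(y),...,x_k*(y)) lies in the wedge (S^m)_{n₁} ∨ ... ∨ (S^m)_{n_k}, i.e. at most one of the xᵢ*(y) is different from the basepoint. -/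
/-!
Restrict the word to the letters `i` and `j` and label each occurrence by `y` of its block.
The labels increase along the word, and if both `y ∘ xᵢ` and `y ∘ xⱼ` are surjective then each
of the `m + 1` labels is carried by an occurrence of `i` and one of `j`. Every such mixed label
forces a change of letter between two consecutive occurrences with that label, so the
restricted word has at least `m + 1` alternations, contradicting `c_{ij}(x) ≤ m`.
-/

/-- Number of alternations (changes of letter) along a word. -/
def altCountF {α : Type*} [DecidableEq α] : List α → ℕ
  | [] => 0
  | [_] => 0
  | a :: b :: rest => (if a = b then 0 else 1) + altCountF (b :: rest)

/-- The individual complexity index `c_{ij}` of a word. -/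
def complexityIdxF {α : Type*} [DecidableEq α] (w : List α) (a b : α) : ℕ :=
  altCountF (w.filter (fun c => c = a ∨ c = b))

section Alternations

variable {α β : Type*}

theorem altCountF_le_altCountF_cons [DecidableEq α] (a : α) (t : List α) :
    altCountF t ≤ altCountF (a :: t) := by
  cases t <;> simp [altCountF]

theorem altCountF_cons_cons_of_ne [DecidableEq α] {a b : α} (h : a ≠ b) (r : List α) :
    altCountF (a :: b :: r) = altCountF (b :: r) + 1 := by
  simp [altCountF, h, add_comm]

def IsMixedAt (l : List (α × β)) (v : β) : Prop :=
  ∃ a b, a ≠ b ∧ (a, v) ∈ l ∧ (b, v) ∈ l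

theorem IsMixedAt.of_cons {a : α × β} {t : List (α × β)} {v : β} (h : IsMixedAt (a :: t) v)
    (hv : v ≠ a.2) : IsMixedAt t v := by
  obtain ⟨b, c, hbc, hb, hc⟩ := h
  have tail : ∀ x, (x, v) ∈ a :: t → (x, v) ∈ t := fun x hx =>
    (List.mem_cons.1 hx).resolve_left fun h => hv (congrArg Prod.snd h)
  exact ⟨b, c, hbc, tail b hb, tail c hc⟩

theorem IsMixedAt.exists_ne_mem_of_cons {a : α × β} {t : List (α × β)}
    (h : IsMixedAt (a :: t) a.2) : ∃ c ≠ a.1, (c, a.2) ∈ t := by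
  obtain ⟨b, c, hbc, hb, hc⟩ := h
  have tail : ∀ x ≠ a.1, (x, a.2) ∈ a :: t → (x, a.2) ∈ t := fun x hx hmem =>
    (List.mem_cons.1 hmem).resolve_left fun h => hx (congrArg Prod.fst h)
  by_cases hba : b = a.1
  · exact ⟨c, hba ▸ hbc.symm, tail c (hba ▸ hbc.symm) hc⟩
  · exact ⟨b, hba, tail b hba hb⟩

theorem card_le_altCountF_map_fst [DecidableEq α] [PartialOrder β] [DecidableEq β]
    {l : List (α × β)} (hl : l.Pairwise (fun p q => p.2 ≤ q.2)) {S : Finset β}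
    (hS : ∀ v ∈ S, IsMixedAt l v) :
    S.card ≤ altCountF (l.map Prod.fst) := by
  induction l generalizing S with
  | nil =>
    have : S = ∅ := Finset.eq_empty_of_forall_notMem fun v hv => by
      obtain ⟨_, _, _, h, _⟩ := hS v hv
      simp at h
    simp [this]
  | cons a t ih =>
    obtain ⟨ha, ht⟩ := List.pairwise_cons.1 hl
    by_cases hnew : a.2 ∈ S ∧ ¬IsMixedAt t a.2
    · obtain ⟨c, hca, hct⟩ := (hS a.2 hnew.1).exists_ne_mem_of_cons
      obtain ⟨b, r, rfl⟩ := List.exists_cons_of_ne_nil (List.ne_nil_of_mem hct)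
      obtain ⟨hb, -⟩ := List.pairwise_cons.1 ht
      -- the head of the tail sits at the smallest label, hence at `a.2`
      have hb2 : b.2 = a.2 := by
        refine le_antisymm ?_ (ha b List.mem_cons_self)
        rcases List.mem_cons.1 hct with h | h
        · exact (congrArg Prod.snd h).ge
        · exact hb (c, a.2) h
      have hb1 : a.1 ≠ b.1 := fun h =>
        hnew.2 ⟨c, b.1, h ▸ hca, hct, hb2 ▸ List.mem_cons_self⟩
      calc S.card = (S.erase a.2).card + 1 := (Finset.card_erase_add_one hnew.1).symm
        _ ≤ altCountF ((b :: r).map Prod.fst) + 1 := by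
          gcongr
          refine ih ht fun v hv => (hS v (Finset.mem_of_mem_erase hv)).of_cons ?_
          exact Finset.ne_of_mem_erase hv
        _ = altCountF ((a :: b :: r).map Prod.fst) := (altCountF_cons_cons_of_ne hb1 _).symm
    · refine (ih ht fun v hv => ?_).trans (altCountF_le_altCountF_cons _ _)
      by_cases hva : v = a.2
      · subst hva
        exact not_not.1 fun h => hnew ⟨hv, h⟩
      · exact (hS v hv).of_cons hva

end Alternations

/-- The simplicial `m`-sphere `S^m = Δ[m]/∂Δ[m]` is an `L_m`-coalgebra in finite pointed
sets: for `x ∈ L(n₁,…,n_k;n)` of complexity `≤ m` (encoded as a subdivided integer-string,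
i.e. a list of pairs (letter, block index) with monotone block indices), and for an
`n`-simplex `y` of `S^m` (a monotone map `[n] → [m]`; it is non-basepoint iff surjective),
the tuple `(x₁^*(y),…,x_k^*(y))` lies in the wedge: at most one of the composites
`y ∘ xᵢ` is surjective, where `xᵢ` sends an occurrence of `i` to its block index. -/
theorem sphere_is_Lm_coalgebra (k n m : ℕ) (w : List (Fin k × Fin (n+1)))
    (hsort : (w.map Prod.snd).Pairwise (· ≤ ·))
    (y : Fin (n+1) →o Fin (m+1))
    (hc : ∀ i j : Fin k, i ≠ j → complexityIdxF (w.map Prod.fst) i j ≤ m) :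
    ∀ i j : Fin k, i ≠ j →
      ¬((∀ v : Fin (m+1), ∃ p ∈ w, p.1 = i ∧ y p.2 = v) ∧
        (∀ v : Fin (m+1), ∃ p ∈ w, p.1 = j ∧ y p.2 = v)) := by
  intro i j hij ⟨hi, hj⟩
  let P : Fin k × Fin (n+1) → Prop := fun p => p.1 = i ∨ p.1 = j
  let l := (w.filter P).map fun p => (p.1, y p.2)
  have hl : l.Pairwise (fun p q => p.2 ≤ q.2) :=
    List.pairwise_map.2 ((List.pairwise_map.1 hsort).sublist List.filter_sublist |>.imp
      fun h => y.monotone h)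
  have hmixed : ∀ v ∈ Finset.univ, IsMixedAt l v := fun v _ => by
    obtain ⟨p, hp, rfl, rfl⟩ := hi v
    obtain ⟨q, hq, hqj, hqv⟩ := hj (y p.2)
    refine ⟨p.1, j, hij, List.mem_map.2 ⟨p, ?_, rfl⟩, List.mem_map.2 ⟨q, ?_, by rw [hqj, hqv]⟩⟩
    · exact List.mem_filter.2 ⟨hp, by simp [P]⟩
    · exact List.mem_filter.2 ⟨hq, by simp [P, hqj]⟩
  have hword : l.map Prod.fst = (w.map Prod.fst).filter fun c => c = i ∨ c = j := by
    simp [l, P, List.filter_map, Function.comp_def]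
  have hmany := card_le_altCountF_map_fst hl hmixed
  rw [Finset.card_univ, Fintype.card_fin, hword] at hmany
  have hfew := hc i j hij
  unfold complexityIdxF at hfew
  omega
end

section
/- For the cyclic subcategory ΔC of ΔΣ, whose automorphism group of [n] is the cyclic group ℤ/(n+1)ℤ generated by the cycle 0 ↦ 1 ↦ ... ↦ n ↦ 0, the crossed simplicial group property holds: for any g ∈ C_{[n]} = ℤ/(n+1)ℤ and any monotone map φ : [m] → [n], the induced automorphism φ*(g) in ΔΣ (from the unique factorization g ∘ φ = g_*(φ) ∘ φ*(g) with g_*(φ) monotone) again lies in C_{[m]}, i.e. is a power of the standard cycle on {0,...,m}. -/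
/-!
With `F a = φ a + s`, the factorization `ψ ∘ g' = F` with `ψ` monotone, together with the
order condition on the fibres, forces `g'` to order `[m]` lexicographically by `(F a, a)`.
Since `φ` is monotone, the `a` for which `φ a + s` wraps around past `n` form a final segment
of `[m]`; they come first in that order, so it is the order induced by `a ↦ a + d` for a
suitable `d`. A permutation of a finite linear order is determined by the order it induces,
hence `g' = τ^d`.
-/

open Fin.NatCast

theorem finRotate_pow_apply (n k : ℕ) (i : Fin (n + 1)) :
    (finRotate (n + 1) ^ k) i = i + k := by
  induction k with
  | zero => simp
  | succ k ih =>
    rw [pow_succ', Equiv.Perm.mul_apply, ih, finRotate_apply, Nat.cast_succ, add_assoc]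

theorem Equiv.Perm.eq_of_lt_iff_lt {α : Type*} [LinearOrder α] [WellFoundedLT α]
    {e₁ e₂ : Equiv.Perm α} (h : ∀ a b, e₁ a < e₁ b ↔ e₂ a < e₂ b) : e₁ = e₂ := by
  let f : α ≃o α := ⟨e₁.symm.trans e₂, fun {x y} => by
    simpa using (not_congr (h (e₁.symm y) (e₁.symm x))).symm⟩
  ext x
  simpa [f] using congrArg (· (e₁ x)) (Subsingleton.elim (OrderIso.refl α) f)

theorem lt_iff_toLex_lt_of_factorization {α α' β : Type*} [LinearOrder α] [LinearOrder α']
    [LinearOrder β] {g : α → α'} {ψ : α' →o β} {F : α → β} (hfact : ∀ a, ψ (g a) = F a)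
    (horder : ∀ a b, F a = F b → (g a ≤ g b ↔ a ≤ b)) (a b : α) :
    g a < g b ↔ toLex (F a, a) < toLex (F b, b) := by
  rw [Prod.Lex.toLex_lt_toLex]
  constructor
  · intro h
    rcases (hfact a ▸ hfact b ▸ ψ.monotone h.le).lt_or_eq with hF | hF
    · exact .inl hF
    · exact .inr ⟨hF, lt_of_not_ge fun hba => h.not_ge ((horder b a hF.symm).2 hba)⟩
  · rintro (hF | ⟨hF, hab⟩)
    · exact ψ.monotone.reflect_lt (hfact a ▸ hfact b ▸ hF)
    · exact lt_of_not_ge fun hba => hab.not_ge ((horder b a hF.symm).1 hba)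

namespace Monotone

variable {m n : ℕ} {φ : Fin (m + 1) → Fin (n + 1)}

/-- Only pairs of which exactly one member wraps around are compared, so that the case where
every `φ a + c` wraps is covered by `d = 0`. -/
theorem exists_add_wrap_iff (hφ : Monotone φ) (c : Fin (n + 1)) :
    ∃ d : Fin (m + 1), ∀ a b, (n < (φ a : ℕ) + c ∧ (φ b : ℕ) + c ≤ n) ↔
      (m < (a : ℕ) + d ∧ (b : ℕ) + d ≤ m) := by
  by_cases h : ∃ a, (φ a : ℕ) + c ≤ n
  · obtain ⟨a₁, ha₁, hmax⟩ :=
      (Finset.univ.filter fun a => (φ a : ℕ) + c ≤ n).exists_max_image id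
        (by obtain ⟨a, ha⟩ := h; exact ⟨a, by simpa using ha⟩)
    simp only [Finset.mem_filter, Finset.mem_univ, true_and, id] at ha₁ hmax
    have hwrap : ∀ a, n < (φ a : ℕ) + c ↔ a₁ < a := fun a =>
      ⟨fun ha => lt_of_not_ge fun hle => by have := Fin.le_def.1 (hφ hle); omega,
        fun ha => lt_of_not_ge fun hle => ha.not_ge (hmax a hle)⟩
    refine ⟨a₁.rev, fun a b => ?_⟩
    have ha := hwrap a
    have hb := hwrap b
    simp only [Fin.val_rev, Fin.lt_def] at ha hb ⊢
    omega
  · simp only [not_exists, not_le] at h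
    refine ⟨0, fun a b => ?_⟩
    have := h b
    simp only [Fin.val_zero]
    omega

theorem exists_toLex_add_lt_iff_add_lt_add (hφ : Monotone φ) (c : Fin (n + 1)) :
    ∃ d : Fin (m + 1), ∀ a b, toLex (φ a + c, a) < toLex (φ b + c, b) ↔ a + d < b + d := by
  obtain ⟨d, hd⟩ := hφ.exists_add_wrap_iff c
  refine ⟨d, fun a b => ?_⟩
  have hab := hd a b
  have hba := hd b a
  have hφab : φ a < φ b → a < b := hφ.reflect_lt
  have hφba : φ b < φ a → b < a := hφ.reflect_lt
  simp only [Prod.Lex.toLex_lt_toLex, Fin.lt_def, Fin.ext_iff, Fin.val_add_eq_ite]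
    at hφab hφba ⊢
  split_ifs <;> omega

end Monotone

/-- The cyclic category `ΔC` is a crossed simplicial group: for a cyclic automorphism
`g = (finRotate)^s` of `[n]` and a monotone map `φ : [m] → [n]`, the automorphism `φ^*(g)`
of `[m]` arising in the unique factorization `g ∘ φ = g_*(φ) ∘ φ^*(g)` in `ΔΣ` (with
`g_*(φ) = ψ` monotone and `φ^*(g) = g'` a permutation preserving the natural order of the
fibers of `φ`) is again cyclic, i.e. a power of the standard cycle on `{0,…,m}`. -/
theorem cyclic_crossed_simplicial_group (m n s : ℕ) (φ : Fin (m+1) →o Fin (n+1))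
    (g' : Equiv.Perm (Fin (m+1))) (ψ : Fin (m+1) →o Fin (n+1))
    (hfact : ∀ a, ψ (g' a) = (finRotate (n+1) ^ s) (φ a))
    (horder : ∀ a b, φ a = φ b → (g' a ≤ g' b ↔ a ≤ b)) :
    ∃ t : ℕ, g' = finRotate (m+1) ^ t := by
  obtain ⟨d, hd⟩ := φ.monotone.exists_toLex_add_lt_iff_add_lt_add s
  refine ⟨d, Equiv.Perm.eq_of_lt_iff_lt fun a b => ?_⟩
  rw [lt_iff_toLex_lt_of_factorization hfact
      fun a b h => horder a b ((finRotate (n+1) ^ s).injective h),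
    finRotate_pow_apply, finRotate_pow_apply, hd, finRotate_pow_apply, finRotate_pow_apply,
    Fin.cast_val_eq_self]
end

section
/- There is a canonical bijection L(n₁,...,n_k;n) × C_{[n₁]} × ... × C_{[n_k]} ≅ L^{cyc}(n₁,...,n_k;n), obtained by joining and composing, where L^{cyc}(n₁,...,n_k;n) is the set of morphisms x : [n₁]∗...∗[n_k] → [n] in ΔΣ₊ all of whose components xᵢ : [nᵢ] → [n] lie in ΔC. -/
/-- A morphism of `ΔΣ₊` with source `α` (here `α = [n₁] ∗ ⋯ ∗ [n_k]`) and target `[n]`: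
a set map `α → {0,…,n}` together with a total ordering of each fiber, encoded by a
relation `r` which relates only elements of the same fiber, is reflexive, total on each
fiber, antisymmetric and transitive. -/
structure FiberOrderedMap (α : Type) (n : ℕ) where
  toFun : α → Fin (n+1)
  r : α → α → Prop
  mem_fiber : ∀ a b, r a b → toFun a = toFun b
  refl : ∀ a, r a a
  total : ∀ a b, toFun a = toFun b → r a b ∨ r b a
  antisymm : ∀ a b, r a b → r b a → a = b
  trans : ∀ a b c, r a b → r b c → r a c

/-- The `i`-th component of `x : [n₁] ∗ ⋯ ∗ [n_k] → [n]` lies in `Δ`: the restriction of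
`x` to `[nᵢ]` is monotone and its fibers carry the natural order. -/
def IsDeltaComponent {k n : ℕ} {ns : Fin k → ℕ}
    (x : FiberOrderedMap (Σ i : Fin k, Fin (ns i + 1)) n) (i : Fin k) : Prop :=
  Monotone (fun a : Fin (ns i + 1) => x.toFun ⟨i, a⟩) ∧
    ∀ a b : Fin (ns i + 1),
      x.r ⟨i, a⟩ ⟨i, b⟩ ↔ (x.toFun ⟨i, a⟩ = x.toFun ⟨i, b⟩ ∧ a ≤ b)

/-- The `i`-th component of `x` lies in the cyclic category `ΔC`: it factors as a cyclic
permutation (a power of the standard cycle) followed by a monotone map with naturally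
ordered fibers. -/
def IsCyclicComponent {k n : ℕ} {ns : Fin k → ℕ}
    (x : FiberOrderedMap (Σ i : Fin k, Fin (ns i + 1)) n) (i : Fin k) : Prop :=
  ∃ s : ℕ,
    Monotone (fun a : Fin (ns i + 1) => x.toFun ⟨i, ((finRotate (ns i + 1) ^ s)⁻¹ a)⟩) ∧
    ∀ a b : Fin (ns i + 1),
      x.r ⟨i, a⟩ ⟨i, b⟩ ↔ (x.toFun ⟨i, a⟩ = x.toFun ⟨i, b⟩ ∧
        (finRotate (ns i + 1) ^ s) a ≤ (finRotate (ns i + 1) ^ s) b)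

/-!
Precomposing a `Δ`-component with a rotation `g` gives a `ΔC`-component, and every
`ΔC`-component `xᵢ = y ∘ g` arises this way from the `Δ`-map `xᵢ ∘ g⁻¹`. What remains is that
the rotation is unique. If a component is a `Δ`-map both directly and after a nontrivial
rotation `a ↦ a + d`, then it is monotone before and after the rotation, and since the rotation
carries `last` to just below `0` the map is constant. Its single fibre is then ordered both
naturally and by transport along the rotation, so the rotation is an order automorphism of a
finite chain, hence the identity.
-/

open Fin.NatCast Fin.CommRing

namespace FiberOrderedMap

variable {α β : Type} {n : ℕ}

theorem ext {x y : FiberOrderedMap α n} (h₁ : x.toFun = y.toFun) (h₂ : x.r = y.r) :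
    x = y := by
  cases x; cases y; cases h₁; cases h₂; rfl

def comp (x : FiberOrderedMap α n) (e : β ≃ α) : FiberOrderedMap β n where
  toFun b := x.toFun (e b)
  r b b' := x.r (e b) (e b')
  mem_fiber _ _ h := x.mem_fiber _ _ h
  refl _ := x.refl _
  total _ _ h := x.total _ _ h
  antisymm _ _ h h' := e.injective (x.antisymm _ _ h h')
  trans _ _ _ h h' := x.trans _ _ _ h h'

theorem comp_symm_comp (x : FiberOrderedMap α n) (e : β ≃ α) : (x.comp e).comp e.symm = x :=
  ext (funext fun a => congrArg x.toFun (e.apply_symm_apply a))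
    (funext₂ fun a b => by simp only [comp, Equiv.apply_symm_apply])

theorem comp_comp_symm (x : FiberOrderedMap β n) (e : β ≃ α) : (x.comp e.symm).comp e = x := by
  simpa using comp_symm_comp x e.symm

end FiberOrderedMap

section IsDeltaAfter

variable {α β : Type} [Preorder α] [Preorder β]

/-- `(f, R)` is `σ` followed by a map of `Δ`: `f ∘ σ⁻¹` is monotone and `R` is the order on
the fibres of `f` transported from `α` along `σ`. -/
def IsDeltaAfter (σ : Equiv.Perm α) (f : α → β) (R : α → α → Prop) : Prop :=
  Monotone (fun a => f (σ⁻¹ a)) ∧ ∀ a b, R a b ↔ (f a = f b ∧ σ a ≤ σ b)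

theorem IsDeltaAfter.comp {σ : Equiv.Perm α} {f : α → β} {R : α → α → Prop}
    (h : IsDeltaAfter σ f R) (τ : Equiv.Perm α) :
    IsDeltaAfter (σ * τ) (fun a => f (τ a)) (fun a b => R (τ a) (τ b)) := by
  refine ⟨?_, fun a b => h.2 (τ a) (τ b)⟩
  simpa only [mul_inv_rev, Equiv.Perm.mul_apply, Equiv.Perm.coe_inv,
    Equiv.apply_symm_apply] using h.1

end IsDeltaAfter

theorem finRotate_pow_apply_s15 (N s : ℕ) (a : Fin (N + 1)) :
    (finRotate (N + 1) ^ s) a = a + (s : Fin (N + 1)) := by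
  induction s with
  | zero => simp
  | succ s ih =>
    rw [pow_succ', Equiv.Perm.mul_apply, finRotate_apply, ih]
    push_cast
    ring

theorem exists_eq_addRight_of_mem_zpowers_finRotate {N : ℕ} {σ : Equiv.Perm (Fin (N + 1))}
    (hσ : σ ∈ Subgroup.zpowers (finRotate (N + 1))) :
    ∃ d : Fin (N + 1), σ = Equiv.addRight d := by
  obtain ⟨s, rfl⟩ := (Submonoid.mem_powers_iff _ _).1 (mem_powers_iff_mem_zpowers.2 hσ)
  exact ⟨s, Equiv.ext (finRotate_pow_apply_s15 N s)⟩

theorem Monotone.eq_of_monotone_add {N : ℕ} {β : Type} [PartialOrder β] {m : Fin (N + 1) → β}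
    (hm : Monotone m) {d : Fin (N + 1)} (hd : d ≠ 0) (hmd : Monotone fun a => m (a + d))
    (a b : Fin (N + 1)) : m a = m b := by
  -- the step from `-d - 1` to `-d` wraps around from `last` to `0`
  have hwrap : m (-1) ≤ m 0 := by
    have := hmd (Fin.sub_one_lt_iff.2 (Fin.pos_iff_ne_zero.2 (neg_ne_zero.2 hd))).le
    dsimp only at this
    rwa [show -d - 1 + d = -1 by ring, neg_add_cancel] at this
  have hbounds : ∀ c, m 0 ≤ m c ∧ m c ≤ m 0 := fun c =>
    ⟨hm (Fin.zero_le c), (hm (by rw [Fin.le_def, Fin.coe_neg_one]; omega)).trans hwrap⟩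
  exact le_antisymm ((hbounds a).2.trans (hbounds b).1) ((hbounds b).2.trans (hbounds a).1)

theorem IsDeltaAfter.eq_one {N : ℕ} {β : Type} [PartialOrder β] {f : Fin (N + 1) → β}
    {R : Fin (N + 1) → Fin (N + 1) → Prop} {σ : Equiv.Perm (Fin (N + 1))}
    (h : IsDeltaAfter σ f R) (hσ : σ ∈ Subgroup.zpowers (finRotate (N + 1)))
    (h₁ : IsDeltaAfter 1 f R) : σ = 1 := by
  obtain ⟨d, rfl⟩ := exists_eq_addRight_of_mem_zpowers_finRotate hσ
  by_cases hd : d = 0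
  · subst hd; ext; simp
  have hf : ∀ a b, f a = f b := h₁.1.eq_of_monotone_add (neg_ne_zero.2 hd) <| by
    simpa only [inv_one, Equiv.Perm.coe_one, id, Equiv.Perm.coe_inv, Equiv.addRight_symm,
      Equiv.coe_addRight, sub_eq_add_neg] using h.1
  -- `f` is constant, so `R` is both the order of `Fin (N + 1)` and its transport along `· + d`
  let e : Fin (N + 1) ≃o Fin (N + 1) := ⟨Equiv.addRight d, fun {a b} => by
    simpa [hf a b] using ((h.2 a b).symm.trans (h₁.2 a b))⟩
  exact Equiv.ext fun a => congrArg (· a) (Subsingleton.elim e (OrderIso.refl _))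

theorem IsDeltaAfter.unique {N : ℕ} {β : Type} [PartialOrder β] {f : Fin (N + 1) → β}
    {R : Fin (N + 1) → Fin (N + 1) → Prop} {σ τ : Equiv.Perm (Fin (N + 1))}
    (hσ : σ ∈ Subgroup.zpowers (finRotate (N + 1)))
    (hτ : τ ∈ Subgroup.zpowers (finRotate (N + 1)))
    (h : IsDeltaAfter σ f R) (h' : IsDeltaAfter τ f R) : σ = τ := by
  have h₁ := h.comp σ⁻¹
  rw [mul_inv_cancel] at h₁
  have hτσ := Subgroup.mul_mem _ hτ (Subgroup.inv_mem _ hσ)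
  exact (mul_inv_eq_one.1 ((h'.comp σ⁻¹).eq_one hτσ h₁)).symm

section Components

variable {k n : ℕ} {ns : Fin k → ℕ}

theorem isDeltaComponent_iff (x : FiberOrderedMap (Σ i : Fin k, Fin (ns i + 1)) n) (i : Fin k) :
    IsDeltaComponent x i ↔
      IsDeltaAfter 1 (fun a => x.toFun ⟨i, a⟩) (fun a b => x.r ⟨i, a⟩ ⟨i, b⟩) := by
  simp only [IsDeltaComponent, IsDeltaAfter, inv_one, Equiv.Perm.coe_one, id]

theorem isCyclicComponent_iff (x : FiberOrderedMap (Σ i : Fin k, Fin (ns i + 1)) n) (i : Fin k) :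
    IsCyclicComponent x i ↔ ∃ σ ∈ Subgroup.zpowers (finRotate (ns i + 1)),
      IsDeltaAfter σ (fun a => x.toFun ⟨i, a⟩) (fun a b => x.r ⟨i, a⟩ ⟨i, b⟩) := by
  constructor
  · rintro ⟨s, h⟩
    exact ⟨_, Subgroup.npow_mem_zpowers _ s, h⟩
  · rintro ⟨σ, hσ, h⟩
    obtain ⟨s, rfl⟩ := (Submonoid.mem_powers_iff _ _).1 (mem_powers_iff_mem_zpowers.2 hσ)
    exact ⟨s, h⟩

theorem IsDeltaAfter.comp_sigmaCongrRight {x : FiberOrderedMap (Σ i : Fin k, Fin (ns i + 1)) n}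
    {i : Fin k} {τ : Equiv.Perm (Fin (ns i + 1))}
    (h : IsDeltaAfter τ (fun a => x.toFun ⟨i, a⟩) (fun a b => x.r ⟨i, a⟩ ⟨i, b⟩))
    (g : ∀ i, Equiv.Perm (Fin (ns i + 1))) :
    IsDeltaAfter (τ * g i) (fun a => (x.comp (Equiv.sigmaCongrRight g)).toFun ⟨i, a⟩)
      (fun a b => (x.comp (Equiv.sigmaCongrRight g)).r ⟨i, a⟩ ⟨i, b⟩) :=
  h.comp (g i)

theorem isCyclicComponent_comp_sigmaCongrRight
    {x : FiberOrderedMap (Σ i : Fin k, Fin (ns i + 1)) n} {g : ∀ i, Equiv.Perm (Fin (ns i + 1))}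
    {i : Fin k} (hx : IsDeltaComponent x i)
    (hg : g i ∈ Subgroup.zpowers (finRotate (ns i + 1))) :
    IsCyclicComponent (x.comp (Equiv.sigmaCongrRight g)) i := by
  have h := ((isDeltaComponent_iff x i).1 hx).comp_sigmaCongrRight g
  rw [one_mul] at h
  exact (isCyclicComponent_iff _ i).2 ⟨g i, hg, h⟩

theorem eq_of_comp_sigmaCongrRight_eq {x x' : FiberOrderedMap (Σ i : Fin k, Fin (ns i + 1)) n}
    {g g' : ∀ i, Equiv.Perm (Fin (ns i + 1))} (hx : ∀ i, IsDeltaComponent x i)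
    (hx' : ∀ i, IsDeltaComponent x' i)
    (hg : ∀ i, g i ∈ Subgroup.zpowers (finRotate (ns i + 1)))
    (hg' : ∀ i, g' i ∈ Subgroup.zpowers (finRotate (ns i + 1)))
    (h : x.comp (Equiv.sigmaCongrRight g) = x'.comp (Equiv.sigmaCongrRight g')) :
    x = x' ∧ g = g' := by
  have hgg : g = g' := funext fun i => by
    have hd := ((isDeltaComponent_iff x i).1 (hx i)).comp_sigmaCongrRight g
    have hd' := ((isDeltaComponent_iff x' i).1 (hx' i)).comp_sigmaCongrRight g'
    rw [one_mul, h] at hd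
    rw [one_mul] at hd'
    exact hd.unique (hg i) (hg' i) hd'
  subst hgg
  refine ⟨?_, rfl⟩
  rw [← x.comp_symm_comp (Equiv.sigmaCongrRight g), h, FiberOrderedMap.comp_symm_comp]

theorem exists_comp_sigmaCongrRight_eq {y : FiberOrderedMap (Σ i : Fin k, Fin (ns i + 1)) n}
    (hy : ∀ i, IsCyclicComponent y i) :
    ∃ x : FiberOrderedMap (Σ i : Fin k, Fin (ns i + 1)) n, (∀ i, IsDeltaComponent x i) ∧
      ∃ g : ∀ i, Equiv.Perm (Fin (ns i + 1)),
        (∀ i, g i ∈ Subgroup.zpowers (finRotate (ns i + 1))) ∧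
          x.comp (Equiv.sigmaCongrRight g) = y := by
  choose σ hσ hyσ using fun i => (isCyclicComponent_iff y i).1 (hy i)
  refine ⟨y.comp (Equiv.sigmaCongrRight σ).symm, fun i => ?_, σ, hσ, y.comp_comp_symm _⟩
  rw [isDeltaComponent_iff, ← mul_inv_cancel (σ i)]
  exact (hyσ i).comp (σ i)⁻¹

end Components

/-- There is a canonical bijection
`L(n₁,…,n_k;n) × C_{[n₁]} × ⋯ × C_{[n_k]} ≅ L^{cyc}(n₁,…,n_k;n)` obtained by joining and
composing: here `L` (resp. `L^{cyc}`) is the set of morphisms `[n₁] ∗ ⋯ ∗ [n_k] → [n]`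
in `ΔΣ₊` all of whose components lie in `Δ` (resp. in `ΔC`), the group `C_{[nᵢ]}` of
cyclic automorphisms of `[nᵢ]` is the cyclic subgroup generated by `finRotate (nᵢ+1)`,
and the bijection sends `(x, g₁,…,g_k)` to the composite `x ∘ (g₁ ∗ ⋯ ∗ g_k)`. -/
theorem cyclic_lattice_paths_bijection (k n : ℕ) (ns : Fin k → ℕ) :
    ∃ e : ({ x : FiberOrderedMap (Σ i : Fin k, Fin (ns i + 1)) n //
              ∀ i : Fin k, IsDeltaComponent x i }
           × (∀ i : Fin k, { g : Equiv.Perm (Fin (ns i + 1)) //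
                g ∈ Subgroup.zpowers (finRotate (ns i + 1)) }))
          ≃ { x : FiberOrderedMap (Σ i : Fin k, Fin (ns i + 1)) n //
                ∀ i : Fin k, IsCyclicComponent x i },
      ∀ x gs,
        ((e (x, gs)).val.toFun = fun v : Σ i : Fin k, Fin (ns i + 1) =>
            x.val.toFun ⟨v.1, (gs v.1).val v.2⟩) ∧
        (∀ v w : Σ i : Fin k, Fin (ns i + 1),
          (e (x, gs)).val.r v w ↔
            x.val.r ⟨v.1, (gs v.1).val v.2⟩ ⟨w.1, (gs w.1).val w.2⟩) := by
  let F : ({ x : FiberOrderedMap (Σ i : Fin k, Fin (ns i + 1)) n //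
              ∀ i : Fin k, IsDeltaComponent x i }
           × (∀ i : Fin k, { g : Equiv.Perm (Fin (ns i + 1)) //
                g ∈ Subgroup.zpowers (finRotate (ns i + 1)) })) →
      { x : FiberOrderedMap (Σ i : Fin k, Fin (ns i + 1)) n //
                ∀ i : Fin k, IsCyclicComponent x i } := fun p =>
    ⟨p.1.1.comp (Equiv.sigmaCongrRight fun i => (p.2 i).1),
      fun i => isCyclicComponent_comp_sigmaCongrRight (p.1.2 i) (p.2 i).2⟩
  have hF : Function.Bijective F := by
    refine ⟨fun ⟨x, g⟩ ⟨x', g'⟩ h => ?_, fun ⟨y, hy⟩ => ?_⟩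
    · obtain ⟨hxx, hgg⟩ := eq_of_comp_sigmaCongrRight_eq x.2 x'.2 (fun i => (g i).2)
        (fun i => (g' i).2) (congrArg Subtype.val h)
      exact Prod.ext (Subtype.ext hxx) (funext fun i => Subtype.ext (congrFun hgg i))
    · obtain ⟨x, hx, g, hg, rfl⟩ := exists_comp_sigmaCongrRight_eq hy
      exact ⟨(⟨x, hx⟩, fun i => ⟨g i, hg i⟩), rfl⟩
  exact ⟨Equiv.ofBijective F hF, fun _ _ => ⟨rfl, fun _ _ => Iff.rfl⟩⟩
end

section
/- Let x be an integer-string (word in {1,...,k}) and let i < j. If the alternation count c_{ij}(x) between letters i and j is even, then for any cyclic rotation x' of x, the alternation count c_{ij}(x') equals c_{ij}(x) or c_{ij}(x) - 1. In particular the cyclic complexity, defined as the least even upper bound of all c_{ij} over all cyclic rotations, satisfies c_cyc(x) ≤ c(x) + 1 and is invariant under cyclic rotation. -/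
/-- The cyclic complexity of a word: the smallest even integer bounding all individual
complexity indices of all cyclic rotations of the word. -/
noncomputable def cycComplexity (x : List ℕ) : ℕ :=
  sInf {e : ℕ | Even e ∧ ∀ i j : ℕ, i ≠ j → ∀ t : ℕ, complexityIdx (x.rotate t) i j ≤ e}

/-!
Read cyclically, i.e. counting also the pair (last letter, first letter), the number of
alternations of a word is invariant under rotation, and it exceeds the linear count by one
exactly when the first and last letters differ. Filtering a rotation of `x` gives a rotation
of the filtered word, so `c_ij` of any rotation of `x` is within one of `c_ij(x)`. Over a
two-letter alphabet the linear count is even iff the word begins and ends with the same letter;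
then it equals the cyclic count, which bounds the count of every rotation. Hence an even bound
on all `c_ij(x)` bounds them on every rotation as well, which gives `c_cyc(x) ≤ c(x) + 1`.
-/

open List

theorem List.IsRotated.filter {α : Type*} {l l' : List α} (h : l ~r l') (p : α → Bool) :
    l.filter p ~r l'.filter p := by
  obtain ⟨n, rfl⟩ := h
  conv_lhs => rw [← take_append_drop (n % l.length) l]
  rw [rotate_eq_drop_append_take_mod, filter_append, filter_append]
  exact isRotated_append

theorem List.IsRotated.forall_rotate_iff {α : Type*} {l l' : List α} (h : l ~r l')
    {P : List α → Prop} : (∀ n, P (l.rotate n)) ↔ ∀ n, P (l'.rotate n) := by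
  suffices key : ∀ {l l' : List α}, l ~r l' → (∀ n, P (l.rotate n)) → ∀ n, P (l'.rotate n) from
    ⟨key h, key h.symm⟩
  intro l l' h hP n
  obtain ⟨m, hm⟩ := h.trans (IsRotated.forall l' n).symm
  exact hm ▸ hP m

def cycAltCount (l : List ℕ) : ℕ :=
  (l.zip (l.rotate 1)).countP fun p => p.1 ≠ p.2

theorem cycAltCount_rotate (l : List ℕ) (n : ℕ) : cycAltCount (l.rotate n) = cycAltCount l := by
  have hzip : (l.rotate n).zip ((l.rotate n).rotate 1) = (l.zip (l.rotate 1)).rotate n := by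
    rw [rotate_rotate, add_comm, ← rotate_rotate, zip_eq_zipWith, zip_eq_zipWith,
      zipWith_rotate_distrib _ _ _ _ (length_rotate ..).symm]
  rw [cycAltCount, cycAltCount, hzip, (rotate_perm _ _).countP_eq]

theorem List.IsRotated.cycAltCount_eq {l l' : List ℕ} (h : l ~r l') :
    cycAltCount l = cycAltCount l' := by
  obtain ⟨n, rfl⟩ := h
  exact (cycAltCount_rotate l n).symm

theorem countP_zip_cons_append_singleton (a c : ℕ) (t : List ℕ) :
    ((a :: t).zip (t ++ [c])).countP (fun p => p.1 ≠ p.2) =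
      altCount (a :: t) + if (a :: t).getLast (cons_ne_nil a t) = c then 0 else 1 := by
  induction t generalizing a with
  | nil => split_ifs <;> simp_all [altCount]
  | cons b t ih =>
    simp only [cons_append, zip_cons_cons, countP_cons, ih, altCount, getLast_cons_cons]
    split_ifs <;> simp_all <;> omega

theorem cycAltCount_cons (a : ℕ) (t : List ℕ) :
    cycAltCount (a :: t) =
      altCount (a :: t) + if (a :: t).getLast (cons_ne_nil a t) = a then 0 else 1 := by
  rw [cycAltCount, rotate_cons_succ, rotate_zero, countP_zip_cons_append_singleton]

theorem altCount_le_cycAltCount (l : List ℕ) : altCount l ≤ cycAltCount l := by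
  cases l with
  | nil => rfl
  | cons a t => rw [cycAltCount_cons]; omega

theorem cycAltCount_le_altCount_add_one (l : List ℕ) : cycAltCount l ≤ altCount l + 1 := by
  cases l with
  | nil => simp [cycAltCount]
  | cons a t => rw [cycAltCount_cons]; split <;> omega

theorem even_altCount_iff {a b c : ℕ} {t : List ℕ} (h : ∀ x ∈ c :: t, x = a ∨ x = b) :
    Even (altCount (c :: t)) ↔ c = (c :: t).getLast (cons_ne_nil c t) := by
  induction t generalizing c with
  | nil => simp [altCount]
  | cons d t ih =>
    have hc := h c mem_cons_self
    have hd := h d (by simp)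
    have hL := h _ (getLast_mem (cons_ne_nil c (d :: t)))
    rw [getLast_cons_cons] at hL ⊢
    rw [altCount, Nat.even_add, ih fun x hx => h x (mem_cons_of_mem c hx)]
    -- three letters from `{a, b}` satisfy `c = L ↔ (c = d ↔ d = L)`
    grind

theorem altCount_le_altCount_add_one_of_isRotated {l l' : List ℕ} (h : l ~r l') :
    altCount l ≤ altCount l' + 1 :=
  calc altCount l ≤ cycAltCount l := altCount_le_cycAltCount l
    _ = cycAltCount l' := h.cycAltCount_eq
    _ ≤ altCount l' + 1 := cycAltCount_le_altCount_add_one l'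

theorem cycAltCount_eq_altCount_of_even {a b : ℕ} {l : List ℕ} (hl : ∀ x ∈ l, x = a ∨ x = b)
    (he : Even (altCount l)) : cycAltCount l = altCount l := by
  cases l with
  | nil => rfl
  | cons c t => rw [cycAltCount_cons, if_pos ((even_altCount_iff hl).1 he).symm, add_zero]

theorem altCount_le_of_isRotated_of_even {a b : ℕ} {l l' : List ℕ} (h : l ~r l')
    (hl' : ∀ x ∈ l', x = a ∨ x = b) (he : Even (altCount l')) : altCount l ≤ altCount l' :=
  calc altCount l ≤ cycAltCount l := altCount_le_cycAltCount l
    _ = cycAltCount l' := h.cycAltCount_eq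
    _ = altCount l' := cycAltCount_eq_altCount_of_even hl' he

theorem isRotated_filter_rotate (x : List ℕ) (i j t : ℕ) :
    (x.rotate t).filter (fun c => c = i ∨ c = j) ~r x.filter (fun c => c = i ∨ c = j) :=
  (IsRotated.forall x t).filter _

theorem complexityIdx_rotate_le_of_even {x : List ℕ} {i j e : ℕ} (he : Even e)
    (h : complexityIdx x i j ≤ e) (t : ℕ) : complexityIdx (x.rotate t) i j ≤ e := by
  have hrot := isRotated_filter_rotate x i j t
  rcases h.lt_or_eq with hlt | rfl
  · have := altCount_le_altCount_add_one_of_isRotated hrot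
    unfold complexityIdx at *
    omega
  · exact altCount_le_of_isRotated_of_even hrot (fun c hc => by simpa using of_mem_filter hc) he

theorem cycComplexity_le_of_even {x : List ℕ} {e : ℕ} (he : Even e)
    (h : ∀ i j, i ≠ j → complexityIdx x i j ≤ e) : cycComplexity x ≤ e :=
  Nat.sInf_le ⟨he, fun i j hij t => complexityIdx_rotate_le_of_even he (h i j hij) t⟩

theorem cycComplexity_eq_of_isRotated {x y : List ℕ} (h : x ~r y) :
    cycComplexity x = cycComplexity y := by
  unfold cycComplexity
  congr 1
  ext e
  exact and_congr_right fun _ => forall₂_congr fun i j => imp_congr_right fun _ =>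
    h.forall_rotate_iff (P := fun w => complexityIdx w i j ≤ e)

/-- If the alternation count `c_{ij}(x)` between two letters is even, then any cyclic
rotation of the word has alternation count `c_{ij}(x)` or `c_{ij}(x) - 1`.  Consequently
the cyclic complexity satisfies `c_cyc(x) ≤ c(x) + 1` and is invariant under cyclic
rotation. -/
theorem cyclic_complexity_rotation :
    (∀ (x : List ℕ) (i j : ℕ), i ≠ j → Even (complexityIdx x i j) →
      ∀ t : ℕ, complexityIdx (x.rotate t) i j = complexityIdx x i j ∨
        complexityIdx (x.rotate t) i j + 1 = complexityIdx x i j) ∧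
    (∀ (x : List ℕ) (M : ℕ), (∀ i j : ℕ, i ≠ j → complexityIdx x i j ≤ M) →
      cycComplexity x ≤ M + 1) ∧
    (∀ (x : List ℕ) (t : ℕ), cycComplexity (x.rotate t) = cycComplexity x) := by
  refine ⟨fun x i j _ he t => ?_, fun x M h => ?_, fun x t => ?_⟩
  · have hle := complexityIdx_rotate_le_of_even he le_rfl t
    have hge := altCount_le_altCount_add_one_of_isRotated (isRotated_filter_rotate x i j t).symm
    unfold complexityIdx at *
    omega
  · rcases Nat.even_or_odd M with hM | hM
    · exact (cycComplexity_le_of_even hM h).trans M.le_succ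
    · exact cycComplexity_le_of_even hM.add_one fun i j hij => (h i j hij).trans M.le_succ
  · exact cycComplexity_eq_of_isRotated (IsRotated.forall x t)
end

section
/- If A is a symmetric Frobenius algebra over a commutative ring k with nondegenerate symmetric associative pairing ⟨-,-⟩ : A ⊗ A → k, then the endomorphism operad End_A(n) = Hom_k(A^{⊗n}, A) carries cyclic ℤ/(n+1)ℤ-actions, defined via the isomorphisms Hom_k(A^{⊗n},A) ≅ Hom_k(A^{⊗(n+1)},k) induced by the pairing and cyclic permutation of the n+1 tensor factors, and the operadic ∘ᵢ-compositions satisfy the cyclic operad equivariance relations: τ_{m+n-1}(x ∘₁ y) = τ_n(y) ∘_n τ_m(x) and τ_{m+n-1}(x ∘ᵢ y) = τ_m(x) ∘_{i-1} y for i > 1, where τ_m is the standard cyclic generator. -/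
/-!
The pairing is nondegenerate, so an operation is determined by its pairings and the rotation
`τ f` is unique; each relation therefore reduces to checking that its right-hand side is a
rotation of the composite. Paired with a new argument `a₀`, that is a reindexing of the inputs,
except for `τ_{m+n-1}(x ∘₁ y)`: there the output of `τ x` sits in an input of `τ y`, so the
pairing passes through both rotations, with one use of symmetry in between.
-/

/-- Operadic insertion `x ∘ᵢ y` for multilinear operations: insert the `n`-ary operation
`g` into the `i`-th argument (0-indexed) of the `(p+1)`-ary operation `f`. -/
def insertOp {A : Type*} {p n : ℕ} (f : (Fin (p+1) → A) → A) (i : Fin (p+1))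
    (g : (Fin n → A) → A) : (Fin (p + n) → A) → A :=
  fun a => f (fun t =>
    if _ : (t : ℕ) < (i : ℕ) then a ⟨t, by have := t.isLt; have := i.isLt; omega⟩
    else if _ : (t : ℕ) = (i : ℕ) then
      g (fun s => a ⟨(i : ℕ) + (s : ℕ), by have := i.isLt; have := s.isLt; omega⟩)
    else a ⟨(t : ℕ) + n - 1, by have := t.isLt; have := i.isLt; omega⟩)

/-- `g` is the cyclic rotation `τ f` of the `n`-ary operation `f` with respect to the
pairing `B`: identifying an `n`-ary operation `f` with the `(n+1)`-linear form
`(a₀,…,a_n) ↦ ⟨a₀, f(a₁,…,a_n)⟩`, the form of `g` is the form of `f` with cyclically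
rotated arguments `(a₀,…,a_n) ↦ (a_n,a₀,…,a_{n-1})`. -/
def IsCyclicRotation {kk A : Type*} [CommRing kk] [Ring A] [Algebra kk A]
    (B : A →ₗ[kk] A →ₗ[kk] kk) (n : ℕ) (f g : (Fin n → A) → A) : Prop :=
  ∀ a : Fin (n+1) → A,
    B (a 0) (g (fun t : Fin n => a t.succ)) =
      B (a (Fin.last n)) (f (fun t : Fin n => a t.castSucc))

namespace IsCyclicRotation

variable {kk A : Type*} [CommRing kk] [Ring A] [Algebra kk A] {B : A →ₗ[kk] A →ₗ[kk] kk}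

theorem unique (hnd : ∀ b : A, (∀ a : A, B a b = 0) → b = 0) {n : ℕ}
    {f g g' : (Fin n → A) → A} (hg : IsCyclicRotation B n f g)
    (hg' : IsCyclicRotation B n f g') : g = g' := by
  funext v
  refine sub_eq_zero.mp (hnd _ fun a₀ => ?_)
  have h := hg (Fin.cons a₀ v)
  have h' := hg' (Fin.cons a₀ v)
  simp only [Fin.cons_zero, Fin.cons_succ] at h h'
  rw [map_sub, h, h', sub_self]

theorem pairing_apply {m : ℕ} {f g : (Fin (m+1) → A) → A}
    (h : IsCyclicRotation B (m+1) f g) (a₀ : A) (v : Fin (m+1) → A) :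
    B a₀ (g v) = B (v (Fin.last m)) (f (Fin.cases a₀ fun j : Fin m => v j.castSucc)) := by
  have hcons := h (Fin.cons a₀ v)
  simp only [Fin.cons_zero, Fin.cons_succ, ← Fin.succ_last] at hcons
  convert hcons using 3
  funext t
  cases t using Fin.cases <;> simp

theorem insertOp_zero (hsymm : ∀ a b : A, B a b = B b a) {p q : ℕ}
    {x tx : (Fin (p+1) → A) → A} {y ty : (Fin (q+1) → A) → A}
    (hx : IsCyclicRotation B (p+1) x tx) (hy : IsCyclicRotation B (q+1) y ty) :
    IsCyclicRotation B (p + (q+1)) (insertOp x 0 y) fun b =>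
      insertOp ty (Fin.last q) tx fun s : Fin (q + (p+1)) =>
        b (Fin.cast (Nat.add_left_comm q p 1) s) := by
  intro a
  dsimp only [insertOp]
  rw [hy.pairing_apply, dif_neg (by simp), dif_pos rfl, hsymm, hx.pairing_apply]
  congr 2
  · exact congrArg a (Fin.ext (by simp only [Fin.val_succ, Fin.val_cast, Fin.val_last]; omega))
  · funext t
    cases t using Fin.cases with
    | zero =>
      rw [Fin.cases_zero, dif_neg (lt_irrefl _), dif_pos rfl]
      congr 1
      funext s
      cases s using Fin.cases with
      | zero => exact congrArg a (Fin.ext (by simp))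
      | succ k =>
        rw [Fin.cases_succ, dif_pos (by simp)]
        exact congrArg a (Fin.ext (by simp))
    | succ j =>
      rw [Fin.cases_succ, dif_neg (by simp), dif_neg (by simp)]
      exact congrArg a (Fin.ext (by
        simp only [Fin.val_succ, Fin.val_cast, Fin.val_castSucc, Fin.val_last]; omega))

theorem insertOp_of_ne_zero {p n : ℕ} {x tx : (Fin (p+1) → A) → A}
    (hx : IsCyclicRotation B (p+1) x tx) (y : (Fin n → A) → A) {i : Fin (p+1)} (hi : i ≠ 0) :
    IsCyclicRotation B (p + n) (insertOp x i y)
      (insertOp tx ⟨(i : ℕ) - 1, (Nat.sub_le _ _).trans_lt i.isLt⟩ y) := by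
  have hi1 : 1 ≤ (i : ℕ) := Fin.pos_of_ne_zero hi
  have hip := i.isLt
  intro a
  rw [insertOp, hx.pairing_apply]
  congr 2
  · rw [dif_neg (by simp only [Fin.val_last]; omega), dif_neg (by simp only [Fin.val_last]; omega)]
    exact congrArg a (Fin.ext (by simp only [Fin.val_succ, Fin.val_last]; omega))
  · funext t
    cases t using Fin.cases with
    | zero => rw [Fin.cases_zero, dif_pos (by simp only [Fin.val_zero]; omega)]; rfl
    | succ j =>
      simp only [Fin.cases_succ, Fin.val_castSucc, Fin.val_succ, Fin.succ_mk, Fin.castSucc_mk]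
      split_ifs <;> first
        | omega
        | exact congrArg a (Fin.mk.inj_iff.mpr (by omega))
        | exact congrArg y (funext fun s => congrArg a (Fin.mk.inj_iff.mpr (by omega)))

end IsCyclicRotation

/-- For a symmetric Frobenius algebra (nondegenerate symmetric associative pairing `B`),
the endomorphism operad `End_A(n) = Hom(A^{⊗n},A)` carries cyclic `ℤ/(n+1)ℤ`-actions
defined via the pairing, and the operadic insertions satisfy the equivariance relations
of a cyclic operad:
`τ_{m+n-1}(x ∘₁ y) = τ_n(y) ∘_n τ_m(x)` and `τ_{m+n-1}(x ∘ᵢ y) = τ_m(x) ∘_{i-1} y`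
for `i > 1`. -/
theorem cyclic_operad_relations_for_frobenius
    (kk : Type*) [CommRing kk] (A : Type*) [Ring A] [Algebra kk A]
    (B : A →ₗ[kk] A →ₗ[kk] kk)
    (hsymm : ∀ a b : A, B a b = B b a)
    (hnd : ∀ b : A, (∀ a : A, B a b = 0) → b = 0) :
    -- first relation: τ(x ∘₁ y) = τ(y) ∘_n τ(x)
    (∀ (p q : ℕ) (x : (Fin (p+1) → A) → A) (y : (Fin (q+1) → A) → A)
        (tx : (Fin (p+1) → A) → A) (ty : (Fin (q+1) → A) → A)
        (tz : (Fin (p + (q+1)) → A) → A),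
      IsCyclicRotation B (p+1) x tx → IsCyclicRotation B (q+1) y ty →
      IsCyclicRotation B (p + (q+1)) (insertOp x 0 y) tz →
      ∀ a : Fin (p + (q+1)) → A,
        tz a = insertOp ty (Fin.last q) tx
          (fun s : Fin (q + (p+1)) => a (Fin.cast (by omega) s))) ∧
    -- second relation: τ(x ∘ᵢ y) = τ(x) ∘_{i-1} y for i > 1
    (∀ (p n : ℕ) (x : (Fin (p+1) → A) → A) (y : (Fin n → A) → A)
        (i : Fin (p+1)), i ≠ 0 →
      ∀ (tx : (Fin (p+1) → A) → A) (tz : (Fin (p + n) → A) → A),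
        IsCyclicRotation B (p+1) x tx →
        IsCyclicRotation B (p + n) (insertOp x i y) tz →
        tz = insertOp tx ⟨(i : ℕ) - 1, by have := i.isLt; omega⟩ y) := by
  exact ⟨fun _ _ _ _ _ _ _ hx hy hz a => congrFun (hz.unique hnd (hx.insertOp_zero hsymm hy)) a,
      fun _ _ _ y _ hi _ _ hx hz => hz.unique hnd (hx.insertOp_of_ne_zero y hi)⟩
end
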